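/- arXiv:1501.03087 — 2 statements merged into one kernel-verified Lean document; each statement's English description precedes it below -/
import Mathlib

section
/- For every integer n ≥ 2 and every w ∈ S̃_n^∘, there exist a unique minimal element u ∈ S̃_n^∘ and a unique vector t ∈ ℕ^{n−1} such that ẇ_i = i·t_i + u̇_i for all 1 ≤ i ≤ n−1, where ẇ and u̇ denote the gap vectors of w and u. -/
open scoped BigOperators

/-- An affine permutation of size `n`: a bijection `ℤ → ℤ` with `w(i+n) = w(i)+n`
and `w(1) + ⋯ + w(n) = n(n+1)/2`. -/
structure AffinePerm (n : ℕ) where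
  toFun : ℤ → ℤ
  bijective : Function.Bijective toFun
  shift : ∀ i : ℤ, toFun (i + n) = toFun i + n
  sum_base : 2 * ∑ i ∈ Finset.Icc (1 : ℤ) (n : ℤ), toFun i = n * (n + 1)

namespace AffinePerm

variable {n k : ℕ}

/-- Coxeter length: number of inversions `(i,j)` with `1 ≤ i ≤ n`, `i < j`, `w(i) > w(j)`. -/
noncomputable def len (w : AffinePerm n) : ℕ :=
  Set.ncard {ij : ℤ × ℤ | 1 ≤ ij.1 ∧ ij.1 ≤ (n : ℤ) ∧ ij.1 < ij.2 ∧ w.toFun ij.2 < w.toFun ij.1}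

/-- `w` contains the pattern `p`. -/
def Contains (w : AffinePerm n) (p : Equiv.Perm (Fin k)) : Prop :=
  ∃ f : Fin k → ℤ, StrictMono f ∧ ∀ a b : Fin k, w.toFun (f a) < w.toFun (f b) ↔ p a < p b

/-- Minimal length coset representative: `w(1) < w(2) < ⋯ < w(n)`. -/
def IsMLCR (w : AffinePerm n) : Prop :=
  ∀ i : ℤ, 1 ≤ i → i < (n : ℤ) → w.toFun i < w.toFun (i + 1)

/-- `m` is a bead of the abacus of `w`. -/
def IsBead (w : AffinePerm n) (m : ℤ) : Prop :=
  ∃ j : ℤ, 1 ≤ j ∧ j ≤ (n : ℤ) ∧ ∃ q : ℕ, m = w.toFun j - (q : ℤ) * n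

/-- `i`-th entry of the gap vector: number of gaps strictly between `w(i)` and `w(i+1)`. -/
noncomputable def gapVec (w : AffinePerm n) (i : ℕ) : ℕ :=
  Set.ncard {m : ℤ | w.toFun (i : ℤ) < m ∧ m < w.toFun ((i : ℤ) + 1) ∧ ¬ w.IsBead m}

/-- Minimal abacus condition: `w(j+1) − w(j) ∈ {1, …, n−1}` for `1 ≤ j ≤ n−1`. -/
def IsMinimal (w : AffinePerm n) : Prop :=
  ∀ j : ℤ, 1 ≤ j → j ≤ (n : ℤ) - 1 →
    1 ≤ w.toFun (j + 1) - w.toFun j ∧ w.toFun (j + 1) - w.toFun j ≤ (n : ℤ) - 1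

/-- `π` is the strand assignment of the instance `f` of a pattern in `w`:
`π a = j` where `w (f a)` differs by a multiple of `n` from the `j`-th smallest
base-window value. -/
def IsStrandOf (w : AffinePerm n) (f : Fin k → ℤ) (π : Fin k → ℕ) : Prop :=
  ∀ a : Fin k, ∃ r : ℤ, 1 ≤ r ∧ r ≤ (n : ℤ) ∧
    Set.ncard {s : ℤ | 1 ≤ s ∧ s ≤ (n : ℤ) ∧ w.toFun s ≤ w.toFun r} = π a ∧
    (n : ℤ) ∣ (w.toFun (f a) - w.toFun r)

/-- `w` contains an instance of `p` whose strand assignment is `π`. -/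
def ContainsWithStrand (w : AffinePerm n) (p : Equiv.Perm (Fin k)) (π : Fin k → ℕ) : Prop :=
  ∃ f : Fin k → ℤ, StrictMono f ∧ (∀ a b : Fin k, w.toFun (f a) < w.toFun (f b) ↔ p a < p b) ∧
    w.IsStrandOf f π

end AffinePerm

/-- Periodic extension `ṽ : ℤ → ℤ` of a permutation `v` of `{1,…,n}`
(realized as `Equiv.Perm (Fin n)` via the shift by one). -/
def periodicExt (n : ℕ) (v : Equiv.Perm (Fin n)) (i : ℤ) : ℤ :=
  if h : 0 < n then
    ((v ⟨((i - 1) % (n : ℤ)).toNat, by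
        have hn : (0 : ℤ) < (n : ℤ) := by exact_mod_cast h
        have h1 := Int.emod_nonneg (i - 1) (ne_of_gt hn)
        have h2 := Int.emod_lt_of_pos (i - 1) hn
        omega⟩ : Fin n).1 : ℤ) + 1 + (n : ℤ) * ((i - 1) / (n : ℤ))
  else i

/-- Number of inversions of a finite permutation. -/
def permInv {n : ℕ} (v : Equiv.Perm (Fin n)) : ℕ :=
  (Finset.univ.filter fun ab : Fin n × Fin n => ab.1 < ab.2 ∧ v ab.2 < v ab.1).card

/-- A sequence of naturals is eventually periodic. -/
def EventuallyPeriodic (A : ℕ → ℕ) : Prop :=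
  ∃ N d : ℕ, 0 < d ∧ ∀ m : ℕ, N ≤ m → A (m + d) = A m

/-- `w` is the unique element of `S̃₃^∘` with gap vector `(t₁, 2·t₂)`. -/
def IsW3 (t : ℕ × ℕ) (w : AffinePerm 3) : Prop :=
  w.IsMLCR ∧ w.gapVec 1 = t.1 ∧ w.gapVec 2 = 2 * t.2

/-- `t ∈ S(p, π)`: `w_t` contains an instance of `p` with strand assignment `π`. -/
def MemS {k : ℕ} (p : Equiv.Perm (Fin k)) (π : Fin k → ℕ) (t : ℕ × ℕ) : Prop :=
  ∃ w : AffinePerm 3, IsW3 t w ∧ w.ContainsWithStrand p π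

/-- Two strand-2 indices are linked below. -/
def LinkedBelow {k : ℕ} (p : Equiv.Perm (Fin k)) (π : Fin k → ℕ) (a b : Fin k) : Prop :=
  π a = 2 ∧ π b = 2 ∧ ∃ r : Fin k, π r = 1 ∧ max a b < r ∧ p r < min (p a) (p b)

/-- Two strand-2 indices are linked above. -/
def LinkedAbove {k : ℕ} (p : Equiv.Perm (Fin k)) (π : Fin k → ℕ) (a b : Fin k) : Prop :=
  π a = 2 ∧ π b = 2 ∧ ∃ r : Fin k, π r = 3 ∧ r < min a b ∧ max (p a) (p b) < p r

/-- Chained below: a sequence of strand-2 indices, consecutive pairs linked below. -/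
def ChainedBelow {k : ℕ} (p : Equiv.Perm (Fin k)) (π : Fin k → ℕ) (a b : Fin k) : Prop :=
  Relation.ReflTransGen (LinkedBelow p π) a b

/-- Chained above: a sequence of strand-2 indices, consecutive pairs linked above. -/
def ChainedAbove {k : ℕ} (p : Equiv.Perm (Fin k)) (π : Fin k → ℕ) (a b : Fin k) : Prop :=
  Relation.ReflTransGen (LinkedAbove p π) a b

/-- A corner of `(p, π)`. -/
def PatternCorner {k : ℕ} (p : Equiv.Perm (Fin k)) (π : Fin k → ℕ) (a b r : Fin k) : Prop :=
  π a = 2 ∧ π b = 2 ∧ a ≠ b ∧ (π r = 1 ∨ π r = 3) ∧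
  ((a < r ∧ r < b) ∨ (b < r ∧ r < a)) ∧
  ((p a < p r ∧ p r < p b) ∨ (p b < p r ∧ p r < p a))

/-- `(p, π)` has a tight corner. -/
def HasTightCorner {k : ℕ} (p : Equiv.Perm (Fin k)) (π : Fin k → ℕ) : Prop :=
  ∃ a b r : Fin k, PatternCorner p π a b r ∧ (ChainedBelow p π a b ∨ ChainedAbove p π a b)

/-- `w = u_t ∘ ṽ` where `u_t ∈ S̃ₙ^∘` has gap vector `(i·tᵢ + u̇⁰ᵢ)`. -/
def Represents {n : ℕ} (u0 : AffinePerm n) (v : Equiv.Perm (Fin n)) (t : Fin (n - 1) → ℕ)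
    (w : AffinePerm n) : Prop :=
  ∃ ut : AffinePerm n, ut.IsMLCR ∧
    (∀ i : Fin (n - 1), ut.gapVec (i.1 + 1) = (i.1 + 1) * t i + u0.gapVec (i.1 + 1)) ∧
    ∀ i : ℤ, w.toFun i = ut.toFun (periodicExt n v i)

section Aux

namespace AffinePerm

variable {n : ℕ}

lemma shift_mul (w : AffinePerm n) (i q : ℤ) : w.toFun (i + n * q) = w.toFun i + n * q := by
  induction q using Int.induction_on with
  | zero => simp
  | succ q ih =>
      have h := w.shift (i + n * q)
      rw [show i + (n:ℤ) * (q + 1) = i + n * q + n by ring, h, ih]; ring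
  | pred q ih =>
      have h := w.shift (i + n * (-(q:ℤ) - 1))
      rw [show i + (n:ℤ) * (-(q:ℤ) - 1) + n = i + n * (-(q:ℤ)) by ring, ih] at h
      linarith

lemma inj' (w : AffinePerm n) : Function.Injective w.toFun := w.bijective.1

lemma res_inj (hn : 0 < n) (w : AffinePerm n) {j j' : ℤ} (h1 : 1 ≤ j) (h2 : j ≤ (n:ℤ))
    (h1' : 1 ≤ j') (h2' : j' ≤ (n:ℤ)) (hd : (n:ℤ) ∣ (w.toFun j - w.toFun j')) : j = j' := by
  obtain ⟨q, hq⟩ := hd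
  have he : w.toFun j = w.toFun (j' + n * q) := by rw [shift_mul]; linarith
  have hj : j = j' + n * q := w.inj' he
  have hnz : (0:ℤ) < (n:ℤ) := by exact_mod_cast hn
  have hq1 : (n:ℤ) * q < n * 1 := by linarith
  have hq2 : (n:ℤ) * (-1) < n * q := by linarith
  have ha := lt_of_mul_lt_mul_left hq1 (le_of_lt hnz)
  have hb := lt_of_mul_lt_mul_left hq2 (le_of_lt hnz)
  have hq0 : q = 0 := by omega
  rw [hq0] at hj; omega

lemma exists_rep (hn : 0 < n) (w : AffinePerm n) (m : ℤ) :
    ∃ j q : ℤ, 1 ≤ j ∧ j ≤ (n:ℤ) ∧ m = w.toFun j + n * q := by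
  obtain ⟨i, hi⟩ := w.bijective.2 m
  have hnz : (0:ℤ) < (n:ℤ) := by exact_mod_cast hn
  have hmod1 := Int.emod_nonneg (i - 1) (ne_of_gt hnz)
  have hmod2 := Int.emod_lt_of_pos (i - 1) hnz
  have hdm := Int.mul_ediv_add_emod (i - 1) (n:ℤ)
  refine ⟨i - n * ((i - 1) / n), (i - 1) / n, by omega, by omega, ?_⟩
  have hs := w.shift_mul (i - (n:ℤ) * ((i-1)/(n:ℤ))) ((i-1)/(n:ℤ))
  rw [show i - (n:ℤ)*((i-1)/(n:ℤ)) + (n:ℤ)*((i-1)/(n:ℤ)) = i by ring] at hs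
  omega

lemma isBead_iff (hn : 0 < n) (w : AffinePerm n) (m : ℤ) {j : ℤ} (h1 : 1 ≤ j) (h2 : j ≤ (n:ℤ))
    (hd : (n:ℤ) ∣ (w.toFun j - m)) : w.IsBead m ↔ m ≤ w.toFun j := by
  have hnz : (0:ℤ) < (n:ℤ) := by exact_mod_cast hn
  constructor
  · rintro ⟨j', hj1, hj2, q, hq⟩
    have hd' : (n:ℤ) ∣ (w.toFun j - w.toFun j') := by
      obtain ⟨c, hc⟩ := hd
      exact ⟨c - q, by rw [hq] at hc; push_cast at hc ⊢; linarith⟩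
    have := res_inj hn w h1 h2 hj1 hj2 hd'
    subst this
    have : (0:ℤ) ≤ (q:ℤ) * n := by positivity
    omega
  · intro hle
    obtain ⟨c, hc⟩ := hd
    have hc0 : 0 ≤ c := by nlinarith
    refine ⟨j, h1, h2, c.toNat, ?_⟩
    have : ((c.toNat : ℤ)) = c := Int.toNat_of_nonneg hc0
    rw [this]; linarith

lemma window_mono (w : AffinePerm n) (hw : w.IsMLCR) {i j : ℤ} (h1 : 1 ≤ i) (hij : i < j)
    (h2 : j ≤ (n:ℤ)) : w.toFun i < w.toFun j := by
  have H : ∀ j : ℤ, i + 1 ≤ j → j ≤ (n:ℤ) → w.toFun i < w.toFun j := by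
    refine Int.le_induction ?_ ?_
    · intro h; exact hw i h1 (by omega)
    · intro j hj ih h
      have := hw j (by omega) (by omega)
      have := ih (by omega)
      omega
  exact H j (by omega) h2

lemma window_mono_le (w : AffinePerm n) (hw : w.IsMLCR) {i j : ℤ} (h1 : 1 ≤ i) (hij : i ≤ j)
    (h2 : j ≤ (n:ℤ)) : w.toFun i ≤ w.toFun j := by
  rcases eq_or_lt_of_le hij with h | h
  · subst h; rfl
  · exact le_of_lt (window_mono w hw h1 h h2)

lemma ext' {u u' : AffinePerm n} (h : ∀ i, u.toFun i = u'.toFun i) : u = u' := by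
  cases u; cases u'
  cases funext h
  rfl

end AffinePerm

end Aux

section Aux2

open Finset

/-- distinct residues mod `n` on the window `[1,n]` -/
def DistRes (n : ℕ) (ρ : ℕ → ℤ) : Prop :=
  ∀ j j' : ℕ, 1 ≤ j → j ≤ n → 1 ≤ j' → j' ≤ n → (n:ℤ) ∣ (ρ j - ρ j') → j = j'

/-- the count appearing in the gap-vector formula -/
def cnt (n : ℕ) (ρ : ℕ → ℤ) (k : ℕ) : ℕ :=
  ((Finset.Icc 1 (k-1)).filter
    (fun j => (ρ (k+1) - ρ j) % (n:ℤ) < (ρ (k+1) - ρ k) % (n:ℤ))).card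

/-- available values at backward step `k` -/
noncomputable def Vk (n : ℕ) (ρ : ℕ → ℤ) (k : ℕ) : Finset ℤ :=
  Finset.Icc (1:ℤ) ((n:ℤ)-1) \ (Finset.Icc (k+2) n).image (fun j => (ρ (k+1) - ρ j) % (n:ℤ))

lemma emod_split (N a b c : ℤ) : (a - c) % N = ((a - b) % N + (b - c) % N) % N := by
  conv_lhs => rw [show a - c = (a - b) + (b - c) by ring]
  rw [Int.add_emod]

lemma nth_exists (r : ℕ) : ∀ (V : Finset ℤ), r < V.card →
    ∃ d, d ∈ V ∧ (V.filter (· < d)).card = r := by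
  induction r with
  | zero =>
      intro V hV
      have hne : V.Nonempty := Finset.card_pos.mp (by omega)
      refine ⟨V.min' hne, V.min'_mem hne, ?_⟩
      rw [Finset.card_eq_zero, Finset.filter_eq_empty_iff]
      intro x hx
      simp only [not_lt]
      exact V.min'_le x hx
  | succ r ih =>
      intro V hV
      have hne : V.Nonempty := Finset.card_pos.mp (by omega)
      set v0 := V.min' hne with hv0
      have hv0m : v0 ∈ V := V.min'_mem hne
      have hcard : (V.erase v0).card = V.card - 1 := Finset.card_erase_of_mem hv0m
      obtain ⟨d, hd, hdc⟩ := ih (V.erase v0) (by omega)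
      have hdV : d ∈ V := Finset.mem_of_mem_erase hd
      have hv0d : v0 < d := by
        have h1 : v0 ≤ d := V.min'_le d hdV
        have h2 : d ≠ v0 := Finset.ne_of_mem_erase hd
        omega
      refine ⟨d, hdV, ?_⟩
      have hVi : V = insert v0 (V.erase v0) := (Finset.insert_erase hv0m).symm
      rw [hVi, Finset.filter_insert, if_pos hv0d, Finset.card_insert_of_notMem, hdc]
      intro hmem
      exact (Finset.notMem_erase v0 V) (Finset.mem_of_mem_filter _ hmem)

lemma nth_unique {V : Finset ℤ} {d d' : ℤ} (hd : d ∈ V) (hd' : d' ∈ V)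
    (h : (V.filter (· < d)).card = (V.filter (· < d')).card) : d = d' := by
  have key : ∀ a b : ℤ, a ∈ V → b ∈ V → a < b →
      (V.filter (· < a)).card < (V.filter (· < b)).card := by
    intro a b ha hb hab
    have hsub : insert a (V.filter (· < a)) ⊆ V.filter (· < b) := by
      intro x hx
      rcases Finset.mem_insert.mp hx with rfl | hx
      · exact Finset.mem_filter.mpr ⟨ha, hab⟩
      · have := Finset.mem_filter.mp hx
        exact Finset.mem_filter.mpr ⟨this.1, lt_trans this.2 hab⟩
    have hni : a ∉ V.filter (· < a) := by
      intro hmem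
      exact absurd (Finset.mem_filter.mp hmem).2 (lt_irrefl a)
    have := Finset.card_le_card hsub
    rw [Finset.card_insert_of_notMem hni] at this
    omega
  rcases lt_trichotomy d d' with hlt | heq | hgt
  · have := key d d' hd hd' hlt; omega
  · exact heq
  · have := key d' d hd' hd hgt; omega

lemma val_mem_Icc {n : ℕ} (hn : 2 ≤ n) {ρ : ℕ → ℤ} (hρ : DistRes n ρ) {a b : ℕ}
    (ha1 : 1 ≤ a) (ha2 : a ≤ n) (hb1 : 1 ≤ b) (hb2 : b ≤ n) (hab : a ≠ b) :
    (ρ a - ρ b) % (n:ℤ) ∈ Finset.Icc (1:ℤ) ((n:ℤ)-1) := by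
  have hnz : (0:ℤ) < (n:ℤ) := by exact_mod_cast (by omega : 0 < n)
  have h1 := Int.emod_nonneg (ρ a - ρ b) (ne_of_gt hnz)
  have h2 := Int.emod_lt_of_pos (ρ a - ρ b) hnz
  have h0 : (ρ a - ρ b) % (n:ℤ) ≠ 0 := by
    intro h
    exact hab (hρ a b ha1 ha2 hb1 hb2 (Int.dvd_of_emod_eq_zero h))
  rw [Finset.mem_Icc]
  omega

lemma val_inj {n : ℕ} (hn : 2 ≤ n) {ρ : ℕ → ℤ} (hρ : DistRes n ρ) {c a b : ℕ}
    (ha1 : 1 ≤ a) (ha2 : a ≤ n) (hb1 : 1 ≤ b) (hb2 : b ≤ n)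
    (h : (ρ c - ρ a) % (n:ℤ) = (ρ c - ρ b) % (n:ℤ)) : a = b := by
  have hd0 : (n:ℤ) ∣ (ρ c - ρ b) - (ρ c - ρ a) := Int.ModEq.dvd h
  have hd : (n:ℤ) ∣ (ρ a - ρ b) := by
    have he : ρ a - ρ b = (ρ c - ρ b) - (ρ c - ρ a) := by ring
    rw [he]; exact hd0
  exact hρ a b ha1 ha2 hb1 hb2 hd

lemma image_eq_Vk {n : ℕ} (hn : 2 ≤ n) {ρ : ℕ → ℤ} (hρ : DistRes n ρ) {k : ℕ}
    (hk1 : 1 ≤ k) (hk2 : k ≤ n - 1) :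
    (Finset.Icc 1 k).image (fun j => (ρ (k+1) - ρ j) % (n:ℤ)) = Vk n ρ k := by
  set f : ℕ → ℤ := fun j => (ρ (k+1) - ρ j) % (n:ℤ) with hf
  have hk1n : k + 1 ≤ n := by omega
  have hmem : ∀ j, 1 ≤ j → j ≤ n → j ≠ k + 1 → f j ∈ Finset.Icc (1:ℤ) ((n:ℤ)-1) := by
    intro j h1 h2 h3
    exact val_mem_Icc hn hρ (by omega) hk1n h1 h2 (fun h => h3 h.symm)
  have hinj : ∀ a ∈ Finset.Icc 1 n, ∀ b ∈ Finset.Icc 1 n, f a = f b → a = b := by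
    intro a ha b hb h
    rw [Finset.mem_Icc] at ha hb
    exact val_inj hn hρ ha.1 ha.2 hb.1 hb.2 h
  have hsub1 : (Finset.Icc 1 k).image f ⊆ Finset.Icc (1:ℤ) ((n:ℤ)-1) := by
    intro x hx
    obtain ⟨j, hj, rfl⟩ := Finset.mem_image.mp hx
    rw [Finset.mem_Icc] at hj
    exact hmem j hj.1 (by omega) (by omega)
  have hsub2 : (Finset.Icc (k+2) n).image f ⊆ Finset.Icc (1:ℤ) ((n:ℤ)-1) := by
    intro x hx
    obtain ⟨j, hj, rfl⟩ := Finset.mem_image.mp hx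
    rw [Finset.mem_Icc] at hj
    exact hmem j (by omega) hj.2 (by omega)
  have hdisj : Disjoint ((Finset.Icc 1 k).image f) ((Finset.Icc (k+2) n).image f) := by
    rw [Finset.disjoint_left]
    intro x hx1 hx2
    obtain ⟨j, hj, rfl⟩ := Finset.mem_image.mp hx1
    obtain ⟨j', hj', he⟩ := Finset.mem_image.mp hx2
    rw [Finset.mem_Icc] at hj hj'
    have := hinj j' (Finset.mem_Icc.mpr ⟨by omega, by omega⟩) j
      (Finset.mem_Icc.mpr ⟨by omega, by omega⟩) he
    omega
  have hcard1 : ((Finset.Icc 1 k).image f).card = k := by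
    rw [Finset.card_image_of_injOn, Nat.card_Icc]
    · omega
    · intro a ha b hb h
      rw [Finset.mem_coe, Finset.mem_Icc] at ha hb
      exact hinj a (Finset.mem_Icc.mpr ⟨ha.1, by omega⟩) b (Finset.mem_Icc.mpr ⟨hb.1, by omega⟩) h
  have hcard2 : ((Finset.Icc (k+2) n).image f).card = n - k - 1 := by
    rw [Finset.card_image_of_injOn, Nat.card_Icc]
    · omega
    · intro a ha b hb h
      rw [Finset.mem_coe, Finset.mem_Icc] at ha hb
      exact hinj a (Finset.mem_Icc.mpr ⟨by omega, ha.2⟩) b (Finset.mem_Icc.mpr ⟨by omega, hb.2⟩) h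
  have hcardI : (Finset.Icc (1:ℤ) ((n:ℤ)-1)).card = n - 1 := by
    rw [Int.card_Icc]
    omega
  have hunion : (Finset.Icc 1 k).image f ∪ (Finset.Icc (k+2) n).image f
      = Finset.Icc (1:ℤ) ((n:ℤ)-1) := by
    apply Finset.eq_of_subset_of_card_le (Finset.union_subset hsub1 hsub2)
    rw [Finset.card_union_of_disjoint hdisj, hcard1, hcard2, hcardI]
    omega
  rw [Vk, ← hunion]
  rw [Finset.union_sdiff_cancel_right hdisj]

lemma cnt_eq_filter {n : ℕ} (hn : 2 ≤ n) {ρ : ℕ → ℤ} (hρ : DistRes n ρ) {k : ℕ}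
    (hk1 : 1 ≤ k) (hk2 : k ≤ n - 1) :
    (ρ (k+1) - ρ k) % (n:ℤ) ∈ Vk n ρ k ∧
    cnt n ρ k = ((Vk n ρ k).filter (· < (ρ (k+1) - ρ k) % (n:ℤ))).card := by
  set f : ℕ → ℤ := fun j => (ρ (k+1) - ρ j) % (n:ℤ) with hf
  set dk : ℤ := (ρ (k+1) - ρ k) % (n:ℤ) with hdk
  have himg := image_eq_Vk hn hρ hk1 hk2
  have hinj : ∀ a ∈ Finset.Icc 1 n, ∀ b ∈ Finset.Icc 1 n, f a = f b → a = b := by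
    intro a ha b hb h
    rw [Finset.mem_Icc] at ha hb
    exact val_inj hn hρ ha.1 ha.2 hb.1 hb.2 h
  constructor
  · rw [← himg]
    exact Finset.mem_image.mpr ⟨k, Finset.mem_Icc.mpr ⟨hk1, le_refl k⟩, rfl⟩
  · have hicc : Finset.Icc 1 k = insert k (Finset.Icc 1 (k-1)) := by
      ext j; simp only [Finset.mem_Icc, Finset.mem_insert]; omega
    have hstep : ((Finset.Icc 1 (k-1)).filter (fun j => f j < dk)).card
        = ((Finset.Icc 1 k).filter (fun j => f j < dk)).card := by
      rw [hicc, Finset.filter_insert, if_neg (lt_irrefl dk)]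
    have hinjOn : Set.InjOn f ((Finset.Icc 1 k).filter (fun j => f j < dk)) := by
      intro a ha b hb h
      simp only [Finset.coe_filter, Set.mem_setOf_eq, Finset.mem_Icc] at ha hb
      exact hinj a (Finset.mem_Icc.mpr ⟨ha.1.1, by omega⟩) b (Finset.mem_Icc.mpr ⟨hb.1.1, by omega⟩) h
    have h2 : ((Finset.Icc 1 k).filter (fun j => f j < dk)).image f
        = (Vk n ρ k).filter (· < dk) := by
      rw [← himg, Finset.filter_image]
    rw [cnt, hstep, ← h2, Finset.card_image_of_injOn hinjOn]

end Aux2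

section Aux3

lemma step_d {n : ℕ} (hn : 2 ≤ n) {ρ ρ' : ℕ → ℤ} (hρ : DistRes n ρ) (hρ' : DistRes n ρ')
    (hc : ∀ k, 1 ≤ k → k ≤ n - 1 → cnt n ρ k = cnt n ρ' k) {m k : ℕ} (hk : k + 1 = n - m)
    (hk1 : 1 ≤ k)
    (ihQ : ∀ a b, 1 ≤ a → n - m ≤ a → a ≤ n → 1 ≤ b → n - m ≤ b → b ≤ n →
      (ρ a - ρ b) % (n:ℤ) = (ρ' a - ρ' b) % (n:ℤ)) :
    (ρ (k+1) - ρ k) % (n:ℤ) = (ρ' (k+1) - ρ' k) % (n:ℤ) := by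
  have hk2 : k ≤ n - 1 := by omega
  have hVeq : Vk n ρ k = Vk n ρ' k := by
    unfold Vk
    congr 1
    apply Finset.image_congr
    intro j hj
    rw [Finset.mem_coe, Finset.mem_Icc] at hj
    exact ihQ (k+1) j (by omega) (by omega) (by omega) (by omega) (by omega) hj.2
  obtain ⟨hm1, hc1⟩ := cnt_eq_filter hn hρ hk1 hk2
  obtain ⟨hm2, hc2⟩ := cnt_eq_filter hn hρ' hk1 hk2
  rw [hVeq] at hm1 hc1
  exact nth_unique hm1 hm2 (hc1.symm.trans ((hc k hk1 hk2).trans hc2))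

lemma d_unique {n : ℕ} (hn : 2 ≤ n) {ρ ρ' : ℕ → ℤ} (hρ : DistRes n ρ) (hρ' : DistRes n ρ')
    (hc : ∀ k, 1 ≤ k → k ≤ n - 1 → cnt n ρ k = cnt n ρ' k) :
    ∀ k, 1 ≤ k → k ≤ n - 1 → (ρ (k+1) - ρ k) % (n:ℤ) = (ρ' (k+1) - ρ' k) % (n:ℤ) := by
  have Q : ∀ m : ℕ, ∀ j j', 1 ≤ j → n - m ≤ j → j ≤ n → 1 ≤ j' → n - m ≤ j' → j' ≤ n →
      (ρ j - ρ j') % (n:ℤ) = (ρ' j - ρ' j') % (n:ℤ) := by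
    intro m
    induction m with
    | zero =>
        intro j j' _ hj2 hj3 _ hj'2 hj'3
        have h1 : j = n := by omega
        have h2 : j' = n := by omega
        subst h1; subst h2; simp
    | succ m ih =>
        intro j j' hj1 hj2 hj3 hj'1 hj'2 hj'3
        by_cases hjj : n - m ≤ j
        · by_cases hjj' : n - m ≤ j'
          · exact ih j j' hj1 hjj hj3 hj'1 hjj' hj'3
          · -- j' = n - m - 1 =: k, j ≥ k + 1
            have hkk : j' + 1 = n - m := by omega
            have hd := step_d hn hρ hρ' hc hkk hj'1 ih
            rw [emod_split (n:ℤ) (ρ j) (ρ (j'+1)) (ρ j'),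
                emod_split (n:ℤ) (ρ' j) (ρ' (j'+1)) (ρ' j'),
                hd, ih j (j'+1) hj1 (by omega) hj3 (by omega) (by omega) (by omega)]
        · have hkk : j + 1 = n - m := by omega
          have hd := step_d hn hρ hρ' hc hkk hj1 ih
          by_cases hjj' : n - m ≤ j'
          · -- j = k, j' ≥ k+1
            have hneg : (ρ j - ρ (j+1)) % (n:ℤ) = (ρ' j - ρ' (j+1)) % (n:ℤ) := by
              have e1 : ρ j - ρ (j+1) = 0 - (ρ (j+1) - ρ j) := by ring
              have e2 : ρ' j - ρ' (j+1) = 0 - (ρ' (j+1) - ρ' j) := by ring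
              rw [e1, e2, Int.sub_emod, Int.sub_emod 0 (ρ' (j+1) - ρ' j), hd]
            rw [emod_split (n:ℤ) (ρ j) (ρ (j+1)) (ρ j'),
                emod_split (n:ℤ) (ρ' j) (ρ' (j+1)) (ρ' j'),
                hneg, ih (j+1) j' (by omega) (by omega) (by omega) hj'1 (by omega) hj'3]
          · -- j = j' = k
            have : j = j' := by omega
            subst this; simp
  intro k hk1 hk2
  exact Q n (k+1) k (by omega) (by omega) (by omega) (by omega) (by omega) (by omega)

end Aux3

section Aux4

lemma distRes_window {n : ℕ} (hn : 2 ≤ n) (u : AffinePerm n) :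
    DistRes n (fun j : ℕ => u.toFun (j:ℤ)) := by
  intro j j' h1 h2 h1' h2' hd
  have := AffinePerm.res_inj (by omega : 0 < n) u
    (by exact_mod_cast h1) (by exact_mod_cast h2) (by exact_mod_cast h1')
    (by exact_mod_cast h2') hd
  exact_mod_cast this

lemma gap_formula {n : ℕ} (hn : 2 ≤ n) (u : AffinePerm n) (hu : u.IsMLCR) (hmin : u.IsMinimal)
    {k : ℕ} (hk1 : 1 ≤ k) (hk2 : k ≤ n - 1) :
    u.gapVec k = cnt n (fun j : ℕ => u.toFun (j:ℤ)) k := by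
  have hn0 : 0 < n := by omega
  have hnz : (0:ℤ) < (n:ℤ) := by exact_mod_cast hn0
  set ρ : ℕ → ℤ := fun j : ℕ => u.toFun (j:ℤ) with hρdef
  have hρ : DistRes n ρ := distRes_window hn u
  set A : ℤ := u.toFun (k:ℤ) with hA
  set B : ℤ := u.toFun ((k:ℤ)+1) with hB
  set d : ℤ := B - A with hd
  have hkZ1 : (1:ℤ) ≤ (k:ℤ) := by exact_mod_cast hk1
  have hkZ2 : (k:ℤ) ≤ (n:ℤ) - 1 := by
    have : (k:ℤ) ≤ ((n-1 : ℕ) : ℤ) := by exact_mod_cast hk2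
    omega
  have hdd := hmin (k:ℤ) hkZ1 hkZ2
  have hd1 : 1 ≤ d := hdd.1
  have hd2 : d ≤ (n:ℤ) - 1 := hdd.2
  have hcast : ((k+1 : ℕ) : ℤ) = (k:ℤ) + 1 := by push_cast; ring
  have hρk1 : ρ (k+1) = B := by rw [hρdef]; simp only; rw [hcast]
  have hρk : ρ k = A := rfl
  have hdmod : d % (n:ℤ) = d := Int.emod_eq_of_lt (by omega) (by omega)
  set F : Finset ℕ := (Finset.Icc 1 (k-1)).filter
    (fun j => 0 < (ρ j - A) % (n:ℤ) ∧ (ρ j - A) % (n:ℤ) < d) with hF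
  set φ : ℕ → ℤ := fun j => A + (ρ j - A) % (n:ℤ) with hφ
  -- the gap set equals the image of F under φ
  have hset : {m : ℤ | u.toFun (k:ℤ) < m ∧ m < u.toFun ((k:ℤ)+1) ∧ ¬ u.IsBead m}
      = ↑(F.image φ) := by
    ext m
    simp only [Set.mem_setOf_eq, Finset.coe_image, Set.mem_image, Finset.mem_coe]
    constructor
    · rintro ⟨h1, h2, h3⟩
      obtain ⟨j₀, q, hj₀1, hj₀2, hrep⟩ := AffinePerm.exists_rep hn0 u m
      have hdvd : (n:ℤ) ∣ u.toFun j₀ - m := ⟨-q, by rw [hrep]; ring⟩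
      have hlt : u.toFun j₀ < m := by
        by_contra hle
        exact h3 ((AffinePerm.isBead_iff hn0 u m hj₀1 hj₀2 hdvd).mpr (by omega))
      have hjk : j₀ ≤ (k:ℤ) := by
        by_contra hgt
        push_neg at hgt
        have : u.toFun ((k:ℤ)+1) ≤ u.toFun j₀ :=
          AffinePerm.window_mono_le u hu (by omega) (by omega) hj₀2
        omega
      have hjne : j₀ ≠ (k:ℤ) := by
        intro he
        subst he
        obtain ⟨c, hc⟩ := hdvd
        have hc1 : (n:ℤ) * c < n * 0 := by rw [mul_zero]; linarith
        have hc2 : (n:ℤ) * (-1) < n * c := by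
          rw [show (n:ℤ) * (-1) = -(n:ℤ) by ring]
          have hdd2 := hdd.2
          linarith
        have := lt_of_mul_lt_mul_left hc1 (le_of_lt hnz)
        have := lt_of_mul_lt_mul_left hc2 (le_of_lt hnz)
        omega
      set j : ℕ := j₀.toNat with hj
      have hjcast : (j:ℤ) = j₀ := Int.toNat_of_nonneg (by omega)
      refine ⟨j, ?_, ?_⟩
      · apply Finset.mem_filter.mpr
        constructor
        · rw [Finset.mem_Icc]; omega
        · have hval : (ρ j - A) % (n:ℤ) = m - A := by
            have : ρ j = m - (n:ℤ) * q := by rw [hρdef]; simp only; rw [hjcast, hrep]; ring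
            rw [this, show m - (n:ℤ)*q - A = (m - A) + (n:ℤ) * (-q) by ring,
              Int.add_mul_emod_self_left]
            exact Int.emod_eq_of_lt (by omega) (by omega)
          rw [hval]
          constructor <;> omega
      · have hval : (ρ j - A) % (n:ℤ) = m - A := by
          have : ρ j = m - (n:ℤ) * q := by rw [hρdef]; simp only; rw [hjcast, hrep]; ring
          rw [this, show m - (n:ℤ)*q - A = (m - A) + (n:ℤ) * (-q) by ring,
            Int.add_mul_emod_self_left]
          exact Int.emod_eq_of_lt (by omega) (by omega)
        rw [hφ]; simp only; rw [hval]; ring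
    · rintro ⟨j, hjF, rfl⟩
      have hjf := Finset.mem_filter.mp hjF
      have hjmem := hjf.1
      have he1 := hjf.2.1
      have he2 := hjf.2.2
      rw [Finset.mem_Icc] at hjmem
      have hjn : (j:ℤ) ≤ (n:ℤ) := by
        have : (j:ℤ) ≤ ((n:ℕ):ℤ) := by exact_mod_cast (by omega : j ≤ n)
        omega
      have hj1 : (1:ℤ) ≤ (j:ℤ) := by exact_mod_cast hjmem.1
      refine ⟨by simp only [hφ]; omega, ?_, ?_⟩
      · simp only [hφ]; omega
      · have hdvd : (n:ℤ) ∣ u.toFun (j:ℤ) - φ j := by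
          refine ⟨(ρ j - A) / n, ?_⟩
          have := Int.mul_ediv_add_emod (ρ j - A) (n:ℤ)
          simp only [hφ]
          rw [hρdef] at *
          simp only at *
          omega
        rw [AffinePerm.isBead_iff hn0 u (φ j) hj1 hjn hdvd]
        have hjltk : u.toFun (j:ℤ) < A := by
          rw [hA]
          exact AffinePerm.window_mono u hu hj1 (by omega) (by omega)
        simp only [hφ]
        omega
  have hinjOn : Set.InjOn φ F := by
    intro a ha b hb h
    rw [hF, Finset.coe_filter, Set.mem_setOf_eq] at ha hb
    rw [Finset.mem_Icc] at *
    have h' : (ρ a - A) % (n:ℤ) = (ρ b - A) % (n:ℤ) := by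
      simp only [hφ] at h; omega
    have hdvd : (n:ℤ) ∣ (ρ a - ρ b) := by
      have hd0 : (n:ℤ) ∣ (ρ a - A) - (ρ b - A) := Int.ModEq.dvd h'.symm
      have : ρ a - ρ b = (ρ a - A) - (ρ b - A) := by ring
      rw [this]; exact hd0
    exact hρ a b (by omega) (by omega) (by omega) (by omega) hdvd
  have hcnt : F = (Finset.Icc 1 (k-1)).filter
      (fun j => (ρ (k+1) - ρ j) % (n:ℤ) < (ρ (k+1) - ρ k) % (n:ℤ)) := by
    rw [hF]
    apply Finset.filter_congr
    intro j hjmem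
    rw [Finset.mem_Icc] at hjmem
    simp only [hρk1, hρk, hd.symm]
    set f : ℤ := (B - ρ j) % (n:ℤ) with hfd
    set e : ℤ := (ρ j - A) % (n:ℤ) with hed
    have hf0 : 0 ≤ f := Int.emod_nonneg _ (ne_of_gt hnz)
    have hfn : f < n := Int.emod_lt_of_pos _ hnz
    have he0 : 0 ≤ e := Int.emod_nonneg _ (ne_of_gt hnz)
    have hen : e < n := Int.emod_lt_of_pos _ hnz
    have hene : e ≠ 0 := by
      intro h0
      have : (n:ℤ) ∣ ρ j - ρ k := Int.dvd_of_emod_eq_zero h0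
      have := hρ j k (by omega) (by omega) hk1 (by omega) this
      omega
    have hfne : f ≠ 0 := by
      intro h0
      have : (n:ℤ) ∣ ρ (k+1) - ρ j := by
        rw [hρk1] at *
        exact Int.dvd_of_emod_eq_zero h0
      have := hρ (k+1) j (by omega) (by omega) (by omega) (by omega) this
      omega
    have hkey : (f + e) % (n:ℤ) = d := by
      rw [hfd, hed, ← Int.add_emod, show B - ρ j + (ρ j - A) = d by rw [hd]; ring, hdmod]
    have hsum : f + e = (n:ℤ) * ((f + e) / n) + d := by
      conv_lhs => rw [← Int.mul_ediv_add_emod (f + e) (n:ℤ)]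
      rw [hkey]
    set q : ℤ := (f + e) / n with hq
    have hq1 : (n:ℤ) * q < n * 2 := by omega
    have hq2 : (n:ℤ) * (-1) < n * q := by omega
    have hqa := lt_of_mul_lt_mul_left hq1 (le_of_lt hnz)
    have hqb := lt_of_mul_lt_mul_left hq2 (le_of_lt hnz)
    have : q = 0 ∨ q = 1 := by omega
    rcases this with h | h <;> rw [h] at hsum <;> simp only [hdmod] <;> omega
  unfold AffinePerm.gapVec
  rw [hset, Set.ncard_coe_finset, Finset.card_image_of_injOn hinjOn, cnt, ← hcnt]

end Aux4

section Aux5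

noncomputable def nthS (V : Finset ℤ) (r : ℕ) : ℤ :=
  if h : r < V.card then (nth_exists r V h).choose else 0

lemma nthS_spec {V : Finset ℤ} {r : ℕ} (h : r < V.card) :
    nthS V r ∈ V ∧ (V.filter (· < nthS V r)).card = r := by
  rw [nthS, dif_pos h]
  exact (nth_exists r V h).choose_spec

noncomputable def Pfun (n : ℕ) (r : ℕ → ℕ) : ℕ → ℕ → ℤ
  | 0 => fun _ => 0
  | (m+1) => fun i =>
      if i ≤ m then Pfun n r m i
      else Pfun n r m m - nthS (Finset.Icc (1:ℤ) ((n:ℤ)-1) \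
        (Finset.range m).image (fun i' => (Pfun n r m m - Pfun n r m i') % (n:ℤ)))
        (r (n - (m+1)))

noncomputable def GG (n : ℕ) (r : ℕ → ℕ) (m : ℕ) : ℤ := Pfun n r m m

noncomputable def Vc (n : ℕ) (r : ℕ → ℕ) (m : ℕ) : Finset ℤ :=
  Finset.Icc (1:ℤ) ((n:ℤ)-1) \ (Finset.range m).image (fun i => (GG n r m - GG n r i) % (n:ℤ))

lemma Pfun_stab (n : ℕ) (r : ℕ → ℕ) : ∀ m i, i ≤ m → Pfun n r m i = GG n r i := by
  intro m
  induction m with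
  | zero => intro i hi; have : i = 0 := by omega
            subst this; rfl
  | succ m ih =>
      intro i hi
      rcases Nat.lt_or_ge i (m+1) with h | h
      · have h' : i ≤ m := by omega
        have : Pfun n r (m+1) i = Pfun n r m i := by
          simp only [Pfun, if_pos h']
        rw [this, ih i h']
      · have : i = m + 1 := by omega
        subst this; rfl

lemma GG_step (n : ℕ) (r : ℕ → ℕ) (m : ℕ) :
    GG n r (m+1) = GG n r m - nthS (Vc n r m) (r (n - (m+1))) := by
  have h1 : GG n r (m+1) = Pfun n r (m+1) (m+1) := rfl
  rw [h1]
  simp only [Pfun, if_neg (by omega : ¬ (m + 1 ≤ m))]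
  have hmm : Pfun n r m m = GG n r m := rfl
  rw [hmm]
  have himg : (Finset.range m).image (fun i' => (GG n r m - Pfun n r m i') % (n:ℤ))
      = (Finset.range m).image (fun i => (GG n r m - GG n r i) % (n:ℤ)) := by
    apply Finset.image_congr
    intro i hi
    rw [Finset.mem_coe, Finset.mem_range] at hi
    simp only [Pfun_stab n r m i (le_of_lt hi)]
  rw [himg, Vc]

section construction

variable {n : ℕ} {r : ℕ → ℕ}

lemma Vc_card_of (hn : 2 ≤ n) (m : ℕ) (hm : m + 1 ≤ n - 1)
    (hdist : ∀ i i', i ≤ m → i' ≤ m → i ≠ i' → ¬ (n:ℤ) ∣ (GG n r i - GG n r i')) :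
    (Vc n r m).card = n - 1 - m := by
  have hnz : (0:ℤ) < (n:ℤ) := by exact_mod_cast (by omega : 0 < n)
  have hsub : (Finset.range m).image (fun i => (GG n r m - GG n r i) % (n:ℤ))
      ⊆ Finset.Icc (1:ℤ) ((n:ℤ)-1) := by
    intro x hx
    obtain ⟨i, hi, rfl⟩ := Finset.mem_image.mp hx
    rw [Finset.mem_range] at hi
    have h1 := Int.emod_nonneg (GG n r m - GG n r i) (ne_of_gt hnz)
    have h2 := Int.emod_lt_of_pos (GG n r m - GG n r i) hnz
    have h0 : (GG n r m - GG n r i) % (n:ℤ) ≠ 0 := by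
      intro h
      exact hdist m i (le_refl m) (by omega) (by omega) (Int.dvd_of_emod_eq_zero h)
    rw [Finset.mem_Icc]; omega
  have hcard : ((Finset.range m).image (fun i => (GG n r m - GG n r i) % (n:ℤ))).card = m := by
    rw [Finset.card_image_of_injOn, Finset.card_range]
    intro a ha b hb h
    rw [Finset.mem_coe, Finset.mem_range] at ha hb
    by_contra hne
    apply hdist b a (by omega) (by omega) (fun hh => hne hh.symm)
    have hd0 : (n:ℤ) ∣ (GG n r m - GG n r b) - (GG n r m - GG n r a) := Int.ModEq.dvd h
    have : GG n r b - GG n r a = (GG n r m - GG n r a) - (GG n r m - GG n r b) := by ring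
    rw [this]
    exact (Int.ModEq.dvd h.symm)
  rw [Vc, Finset.card_sdiff_of_subset hsub, hcard, Int.card_Icc]
  omega

lemma GG_dist (hn : 2 ≤ n) (hr : ∀ k, 1 ≤ k → k ≤ n - 1 → r k < k) :
    ∀ m, m ≤ n - 1 → ∀ i i', i ≤ m → i' ≤ m → i ≠ i' → ¬ (n:ℤ) ∣ (GG n r i - GG n r i') := by
  intro m
  induction m with
  | zero => intro _ i i' hi hi' hne; omega
  | succ m ih =>
      intro hm i i' hi hi' hne
      have ihm := ih (by omega)
      have hcard : (Vc n r m).card = n - 1 - m := Vc_card_of hn m hm ihm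
      have hrlt : r (n - (m+1)) < (Vc n r m).card := by
        rw [hcard]
        have := hr (n - (m+1)) (by omega) (by omega)
        omega
      obtain ⟨hmem, _⟩ := nthS_spec hrlt
      set d : ℤ := nthS (Vc n r m) (r (n - (m+1))) with hdd
      rw [Vc, Finset.mem_sdiff, Finset.mem_Icc] at hmem
      obtain ⟨⟨hd1, hd2⟩, hdnot⟩ := hmem
      have hstep : GG n r (m+1) = GG n r m - d := GG_step n r m
      -- key: for i' ≤ m, ¬ n ∣ GG (m+1) - GG i'
      have key : ∀ i₀, i₀ ≤ m → ¬ (n:ℤ) ∣ (GG n r (m+1) - GG n r i₀) := by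
        intro i₀ hi₀ hdvd
        rw [hstep] at hdvd
        rcases Nat.lt_or_ge i₀ m with hlt | hge
        · -- (GG m - GG i₀) % n = d, contradicting d ∉ image
          apply hdnot
          rw [Finset.mem_image]
          refine ⟨i₀, Finset.mem_range.mpr hlt, ?_⟩
          have h1 : (GG n r m - GG n r i₀) % (n:ℤ) = d % (n:ℤ) := by
            rw [Int.emod_eq_emod_iff_emod_sub_eq_zero]
            apply Int.emod_eq_zero_of_dvd
            have : GG n r m - GG n r i₀ - d = GG n r m - d - GG n r i₀ := by ring
            rw [this]; exact hdvd
          rw [h1]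
          exact Int.emod_eq_of_lt (by omega) (by omega)
        · -- i₀ = m : n ∣ d impossible
          have hi0 : i₀ = m := by omega
          rw [hi0] at hdvd
          have h9 : GG n r m - d - GG n r m = -d := by ring
          rw [h9] at hdvd
          have hdvd' : (n:ℤ) ∣ d := (dvd_neg).mp hdvd
          have := Int.le_of_dvd (by omega) hdvd'
          omega
      rcases Nat.lt_or_ge i (m+1) with h1 | h1
      · rcases Nat.lt_or_ge i' (m+1) with h2 | h2
        · exact ihm i i' (by omega) (by omega) hne
        · have : i' = m + 1 := by omega
          subst this
          intro hdvd
          exact key i (by omega) (by rwa [show GG n r (m+1) - GG n r i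
            = -(GG n r i - GG n r (m+1)) by ring, dvd_neg])
      · have : i = m + 1 := by omega
        subst this
        rcases Nat.lt_or_ge i' (m+1) with h2 | h2
        · exact key i' (by omega)
        · omega

/-- the residue sequence -/
noncomputable def rc (n : ℕ) (r : ℕ → ℕ) (j : ℕ) : ℤ := GG n r (n - j)

lemma rc_distRes (hn : 2 ≤ n) (hr : ∀ k, 1 ≤ k → k ≤ n - 1 → r k < k) : DistRes n (rc n r) := by
  intro j j' h1 h2 h1' h2' hdvd
  by_contra hne
  exact GG_dist hn hr (n-1) (le_refl _) (n - j) (n - j') (by omega) (by omega)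
    (by omega) hdvd

lemma rc_spec (hn : 2 ≤ n) (hr : ∀ k, 1 ≤ k → k ≤ n - 1 → r k < k) {k : ℕ}
    (hk1 : 1 ≤ k) (hk2 : k ≤ n - 1) :
    1 ≤ rc n r (k+1) - rc n r k ∧ rc n r (k+1) - rc n r k ≤ (n:ℤ) - 1 ∧
      cnt n (rc n r) k = r k := by
  set m : ℕ := n - k - 1 with hmdef
  have hm1 : n - k = m + 1 := by omega
  have hm2 : n - (k+1) = m := by omega
  have hm3 : n - (m+1) = k := by omega
  have hmlt : m + 1 ≤ n - 1 := by omega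
  have ihm := GG_dist hn hr m (by omega)
  have hcard : (Vc n r m).card = n - 1 - m := Vc_card_of hn m hmlt ihm
  have hrlt : r (n - (m+1)) < (Vc n r m).card := by
    rw [hcard, hm3]
    have := hr k hk1 hk2
    omega
  obtain ⟨hmem, hcount⟩ := nthS_spec hrlt
  set d : ℤ := nthS (Vc n r m) (r (n - (m+1))) with hdd
  have hstep : GG n r (m+1) = GG n r m - d := GG_step n r m
  have hδ : rc n r (k+1) - rc n r k = d := by
    rw [rc, rc, hm1, hm2, hstep]; ring
  rw [Vc, Finset.mem_sdiff, Finset.mem_Icc] at hmem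
  obtain ⟨⟨hd1, hd2⟩, hdnot⟩ := hmem
  refine ⟨by omega, by omega, ?_⟩
  -- Vk n (rc n r) k = Vc n r m
  have hVeq : Vk n (rc n r) k = Vc n r m := by
    rw [Vk, Vc]
    congr 1
    have hIcc : Finset.Icc (k+2) n = (Finset.range m).image (fun i => n - i) := by
      ext j
      rw [Finset.mem_Icc, Finset.mem_image]
      constructor
      · intro hj
        exact ⟨n - j, Finset.mem_range.mpr (by omega), by omega⟩
      · rintro ⟨i, hi, rfl⟩
        rw [Finset.mem_range] at hi
        omega
    rw [hIcc, Finset.image_image]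
    apply Finset.image_congr
    intro i hi
    rw [Finset.mem_coe, Finset.mem_range] at hi
    simp only [Function.comp]
    rw [rc, rc, hm2, show n - (n - i) = i by omega]
  have hrc : DistRes n (rc n r) := rc_distRes hn hr
  obtain ⟨hmem', hcnt'⟩ := cnt_eq_filter hn hrc hk1 hk2
  rw [hcnt', hVeq]
  have hdmod : (rc n r (k+1) - rc n r k) % (n:ℤ) = d := by
    rw [hδ]
    exact Int.emod_eq_of_lt (by omega) (by omega)
  rw [hdmod]
  rw [hm3] at hcount
  exact hcount

end construction

end Aux5

section Aux6

variable {n : ℕ} {W : ℕ → ℤ}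

/-- periodic extension of a window -/
noncomputable def bFun (n : ℕ) (W : ℕ → ℤ) (i : ℤ) : ℤ :=
  W ((((i - 1) % (n:ℤ)).toNat) + 1) + (n:ℤ) * ((i - 1) / (n:ℤ))

lemma bFun_window (hn : 0 < n) {j : ℕ} (h1 : 1 ≤ j) (h2 : j ≤ n) :
    bFun n W (j:ℤ) = W j := by
  have hnz : (0:ℤ) < (n:ℤ) := by exact_mod_cast hn
  have hjn : (j:ℤ) ≤ (n:ℤ) := by exact_mod_cast h2
  have hj1 : (1:ℤ) ≤ (j:ℤ) := by exact_mod_cast h1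
  have hmod : ((j:ℤ) - 1) % (n:ℤ) = (j:ℤ) - 1 := Int.emod_eq_of_lt (by omega) (by omega)
  have hdiv : ((j:ℤ) - 1) / (n:ℤ) = 0 := Int.ediv_eq_zero_of_lt (by omega) (by omega)
  rw [bFun, hmod, hdiv]
  have : (((j:ℤ) - 1).toNat) + 1 = j := by omega
  rw [this]
  ring

lemma bFun_shift_mul (hn : 0 < n) (i q : ℤ) :
    bFun n W (i + (n:ℤ) * q) = bFun n W i + (n:ℤ) * q := by
  have hnz : ((n:ℤ)) ≠ 0 := by
    have : (0:ℤ) < (n:ℤ) := by exact_mod_cast hn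
    omega
  have e1 : i + (n:ℤ) * q - 1 = (i - 1) + (n:ℤ) * q := by ring
  rw [bFun, bFun, e1, Int.add_mul_emod_self_left, Int.add_mul_ediv_left _ q hnz]
  ring

lemma res_image (hn : 0 < n) (hW : DistRes n W) :
    (Finset.Icc 1 n).image (fun j => W j % (n:ℤ)) = Finset.Icc (0:ℤ) ((n:ℤ)-1) := by
  have hnz : (0:ℤ) < (n:ℤ) := by exact_mod_cast hn
  apply Finset.eq_of_subset_of_card_le
  · intro x hx
    obtain ⟨j, hj, rfl⟩ := Finset.mem_image.mp hx
    have h1 := Int.emod_nonneg (W j) (ne_of_gt hnz)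
    have h2 := Int.emod_lt_of_pos (W j) hnz
    rw [Finset.mem_Icc]; omega
  · have hcard : ((Finset.Icc 1 n).image (fun j => W j % (n:ℤ))).card = n := by
      rw [Finset.card_image_of_injOn, Nat.card_Icc]
      · omega
      · intro a ha b hb h
        rw [Finset.mem_coe, Finset.mem_Icc] at ha hb
        have hd : (n:ℤ) ∣ W a - W b := by
          rw [Int.emod_eq_emod_iff_emod_sub_eq_zero] at h
          exact Int.dvd_of_emod_eq_zero h
        exact hW a b ha.1 ha.2 hb.1 hb.2 hd
    rw [hcard, Int.card_Icc]
    omega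

lemma bFun_bij (hn : 0 < n) (hW : DistRes n W) : Function.Bijective (bFun n W) := by
  have hnz : (0:ℤ) < (n:ℤ) := by exact_mod_cast hn
  constructor
  · intro i i' h
    have hm1 := Int.emod_nonneg (i - 1) (ne_of_gt hnz)
    have hm2 := Int.emod_lt_of_pos (i - 1) hnz
    have hm1' := Int.emod_nonneg (i' - 1) (ne_of_gt hnz)
    have hm2' := Int.emod_lt_of_pos (i' - 1) hnz
    have hdm := Int.mul_ediv_add_emod (i - 1) (n:ℤ)
    have hdm' := Int.mul_ediv_add_emod (i' - 1) (n:ℤ)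
    rw [bFun, bFun] at h
    set a : ℕ := ((i - 1) % (n:ℤ)).toNat with ha
    set a' : ℕ := ((i' - 1) % (n:ℤ)).toNat with ha'
    have hacast : (a:ℤ) = (i - 1) % (n:ℤ) := Int.toNat_of_nonneg hm1
    have hacast' : (a':ℤ) = (i' - 1) % (n:ℤ) := Int.toNat_of_nonneg hm1'
    have hdvd : (n:ℤ) ∣ W (a+1) - W (a'+1) :=
      ⟨(i' - 1) / (n:ℤ) - (i - 1) / (n:ℤ), by linarith⟩
    have heq : a + 1 = a' + 1 :=
      hW (a+1) (a'+1) (by omega) (by omega) (by omega) (by omega) hdvd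
    have haa : a = a' := by omega
    rw [heq] at h
    have hq : (i - 1) / (n:ℤ) = (i' - 1) / (n:ℤ) := by
      have h2 : (n:ℤ) * ((i - 1) / (n:ℤ)) = (n:ℤ) * ((i' - 1) / (n:ℤ)) := by linarith
      exact mul_left_cancel₀ (ne_of_gt hnz) h2
    have h3 : (n:ℤ) * ((i - 1) / (n:ℤ)) = (n:ℤ) * ((i' - 1) / (n:ℤ)) := by rw [hq]
    linarith
  · intro m
    have hmem : m % (n:ℤ) ∈ Finset.Icc (0:ℤ) ((n:ℤ)-1) := by
      have h1 := Int.emod_nonneg m (ne_of_gt hnz)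
      have h2 := Int.emod_lt_of_pos m hnz
      rw [Finset.mem_Icc]; omega
    rw [← res_image hn hW] at hmem
    obtain ⟨j, hj, hjv⟩ := Finset.mem_image.mp hmem
    rw [Finset.mem_Icc] at hj
    have hd1 : (n:ℤ) ∣ W j - m := by
      rw [Int.emod_eq_emod_iff_emod_sub_eq_zero] at hjv
      exact Int.dvd_of_emod_eq_zero hjv
    obtain ⟨c, hc⟩ := hd1
    refine ⟨(j:ℤ) + (n:ℤ) * (-c), ?_⟩
    rw [bFun_shift_mul hn, bFun_window hn hj.1 hj.2]
    linarith

lemma sum_reindex (n : ℕ) (f : ℤ → ℤ) :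
    ∑ i ∈ Finset.Icc (1:ℤ) (n:ℤ), f i = ∑ j ∈ Finset.Icc 1 n, f (j:ℤ) := by
  have hmap : Finset.Icc (1:ℤ) (n:ℤ) = (Finset.Icc 1 n).image (fun j : ℕ => (j:ℤ)) := by
    ext i
    rw [Finset.mem_Icc, Finset.mem_image]
    constructor
    · intro hi
      refine ⟨i.toNat, ?_, by omega⟩
      rw [Finset.mem_Icc]
      omega
    · rintro ⟨j, hj, rfl⟩
      rw [Finset.mem_Icc] at hj
      constructor
      · exact_mod_cast hj.1
      · exact_mod_cast hj.2
  rw [hmap, Finset.sum_image]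
  intro a _ b _ h
  exact Nat.cast_injective h

/-- build an affine permutation from a window -/
noncomputable def buildAP (hn : 0 < n) (hW : DistRes n W)
    (hsum : 2 * ∑ j ∈ Finset.Icc 1 n, W j = (n:ℤ) * ((n:ℤ) + 1)) : AffinePerm n where
  toFun := bFun n W
  bijective := bFun_bij hn hW
  shift := fun i => by
    have := bFun_shift_mul (W := W) hn i 1
    rw [mul_one] at this
    exact this
  sum_base := by
    have h1 : ∑ j ∈ Finset.Icc 1 n, bFun n W (j:ℤ) = ∑ j ∈ Finset.Icc 1 n, W j := by
      apply Finset.sum_congr rfl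
      intro j hj
      rw [Finset.mem_Icc] at hj
      exact bFun_window hn hj.1 hj.2
    rw [sum_reindex n (bFun n W), h1]
    exact hsum

end Aux6

section Aux7

lemma gauss_int (n : ℕ) (hn : 0 < n) :
    2 * ∑ v ∈ Finset.Icc (0:ℤ) ((n:ℤ)-1), v = (n:ℤ) * ((n:ℤ)-1) := by
  have hmap : Finset.Icc (0:ℤ) ((n:ℤ)-1) = (Finset.range n).image (fun i : ℕ => (i:ℤ)) := by
    ext v
    rw [Finset.mem_Icc, Finset.mem_image]
    constructor
    · intro hv
      exact ⟨v.toNat, Finset.mem_range.mpr (by omega), by omega⟩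
    · rintro ⟨i, hi, rfl⟩
      rw [Finset.mem_range] at hi
      constructor
      · exact_mod_cast Nat.zero_le i
      · omega
  rw [hmap, Finset.sum_image (by intro a _ b _ h; exact Nat.cast_injective h)]
  have h1 : ∑ i ∈ Finset.range n, (i:ℤ) = ((∑ i ∈ Finset.range n, i : ℕ) : ℤ) := by
    push_cast; ring
  rw [h1]
  have h2 := Finset.sum_range_id_mul_two n
  have h3 := congrArg (Nat.cast : ℕ → ℤ) h2
  push_cast [Nat.cast_sub (by omega : 1 ≤ n)] at h3
  linarith

lemma cnt_congr {n : ℕ} {ρ ρ' : ℕ → ℤ} {k : ℕ} (hk1 : 1 ≤ k) (hk2 : k ≤ n - 1) (hn : 2 ≤ n)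
    (h : ∀ a b, 1 ≤ a → a ≤ n → 1 ≤ b → b ≤ n → ρ a - ρ b = ρ' a - ρ' b) :
    cnt n ρ k = cnt n ρ' k := by
  unfold cnt
  apply congrArg
  apply Finset.filter_congr
  intro j hj
  rw [Finset.mem_Icc] at hj
  rw [h (k+1) j (by omega) (by omega) (by omega) (by omega),
    h (k+1) k (by omega) (by omega) (by omega) (by omega)]

lemma exists_minimal {n : ℕ} (hn : 2 ≤ n) (r : ℕ → ℕ)
    (hr : ∀ k, 1 ≤ k → k ≤ n - 1 → r k < k) :
    ∃ u : AffinePerm n, u.IsMLCR ∧ u.IsMinimal ∧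
      ∀ k, 1 ≤ k → k ≤ n - 1 → u.gapVec k = r k := by
  have hn0 : 0 < n := by omega
  have hnz : (0:ℤ) < (n:ℤ) := by exact_mod_cast hn0
  set ρ : ℕ → ℤ := rc n r with hρdef
  have hρ : DistRes n ρ := rc_distRes hn hr
  set e : ℤ := 1 - ∑ j ∈ Finset.Icc 1 n, (ρ j / (n:ℤ)) with hedef
  set W : ℕ → ℤ := fun j => ρ j + e with hWdef
  have hdiffs : ∀ a b : ℕ, W a - W b = ρ a - ρ b := by
    intro a b; simp only [hWdef]; ring
  have hWdist : DistRes n W := by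
    intro j j' h1 h2 h1' h2' hdvd
    rw [hdiffs] at hdvd
    exact hρ j j' h1 h2 h1' h2' hdvd
  -- sum condition
  have hsum : 2 * ∑ j ∈ Finset.Icc 1 n, W j = (n:ℤ) * ((n:ℤ) + 1) := by
    have hsplit : ∑ j ∈ Finset.Icc 1 n, ρ j
        = ∑ j ∈ Finset.Icc 1 n, ((n:ℤ) * (ρ j / (n:ℤ)) + ρ j % (n:ℤ)) := by
      apply Finset.sum_congr rfl
      intro j _
      rw [Int.mul_ediv_add_emod]
    have hS : ∑ j ∈ Finset.Icc 1 n, ρ j % (n:ℤ) = ∑ v ∈ Finset.Icc (0:ℤ) ((n:ℤ)-1), v := by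
      rw [← res_image hn0 hρ, Finset.sum_image]
      intro a ha b hb h
      rw [Finset.mem_coe, Finset.mem_Icc] at ha hb
      apply hρ a b ha.1 ha.2 hb.1 hb.2
      rw [Int.emod_eq_emod_iff_emod_sub_eq_zero] at h
      exact Int.dvd_of_emod_eq_zero h
    have hgauss := gauss_int n hn0
    have hWsum : ∑ j ∈ Finset.Icc 1 n, W j
        = (∑ j ∈ Finset.Icc 1 n, ρ j) + (n:ℤ) * e := by
      simp only [hWdef]
      rw [Finset.sum_add_distrib, Finset.sum_const, Nat.card_Icc]
      have hnn : (n + 1 - 1 : ℕ) = n := by omega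
      rw [hnn, nsmul_eq_mul]
    have hrw : ∑ j ∈ Finset.Icc 1 n, ((n:ℤ) * (ρ j / (n:ℤ)) + ρ j % (n:ℤ))
        = (n:ℤ) * (∑ j ∈ Finset.Icc 1 n, (ρ j / (n:ℤ))) + ∑ j ∈ Finset.Icc 1 n, ρ j % (n:ℤ) := by
      rw [Finset.sum_add_distrib, Finset.mul_sum]
    have hne : (n:ℤ) * e = (n:ℤ) - (n:ℤ) * (∑ j ∈ Finset.Icc 1 n, (ρ j / (n:ℤ))) := by
      rw [hedef]; ring
    rw [hWsum, hsplit, hrw, hne, hS]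
    linarith
  set u : AffinePerm n := buildAP hn0 hWdist hsum with hudef
  have hwin : ∀ j : ℕ, 1 ≤ j → j ≤ n → u.toFun (j:ℤ) = W j := by
    intro j h1 h2
    exact bFun_window hn0 h1 h2
  have hδ : ∀ k : ℕ, 1 ≤ k → k ≤ n - 1 →
      1 ≤ W (k+1) - W k ∧ W (k+1) - W k ≤ (n:ℤ) - 1 := by
    intro k h1 h2
    rw [hdiffs]
    have := rc_spec hn hr h1 h2
    exact ⟨this.1, this.2.1⟩
  have hMLCR : u.IsMLCR := by
    intro i h1 h2
    set k : ℕ := i.toNat with hk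
    have hki : (k:ℤ) = i := Int.toNat_of_nonneg (by omega)
    have hk1 : 1 ≤ k := by omega
    have hk2 : k ≤ n - 1 := by omega
    have e1 : u.toFun i = W k := by rw [← hki]; exact hwin k hk1 (by omega)
    have e2 : u.toFun (i + 1) = W (k+1) := by
      rw [← hki, show ((k:ℤ) + 1) = ((k+1 : ℕ) : ℤ) by push_cast; ring]
      exact hwin (k+1) (by omega) (by omega)
    rw [e1, e2]
    have := hδ k hk1 hk2
    omega
  have hMin : u.IsMinimal := by
    intro i h1 h2
    set k : ℕ := i.toNat with hk
    have hki : (k:ℤ) = i := Int.toNat_of_nonneg (by omega)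
    have hk1 : 1 ≤ k := by omega
    have hk2 : k ≤ n - 1 := by omega
    have e1 : u.toFun i = W k := by rw [← hki]; exact hwin k hk1 (by omega)
    have e2 : u.toFun (i + 1) = W (k+1) := by
      rw [← hki, show ((k:ℤ) + 1) = ((k+1 : ℕ) : ℤ) by push_cast; ring]
      exact hwin (k+1) (by omega) (by omega)
    rw [e1, e2]
    exact hδ k hk1 hk2
  refine ⟨u, hMLCR, hMin, ?_⟩
  intro k hk1 hk2
  rw [gap_formula hn u hMLCR hMin hk1 hk2]
  have h1 : cnt n (fun j : ℕ => u.toFun (j:ℤ)) k = cnt n W k := by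
    apply cnt_congr hk1 hk2 hn
    intro a b ha1 ha2 hb1 hb2
    rw [hwin a ha1 ha2, hwin b hb1 hb2]
  have h2 : cnt n W k = cnt n ρ k := by
    apply cnt_congr hk1 hk2 hn
    intro a b _ _ _ _
    exact hdiffs a b
  rw [h1, h2]
  exact (rc_spec hn hr hk1 hk2).2.2

lemma minimal_gap_lt {n : ℕ} (hn : 2 ≤ n) (u : AffinePerm n) (hu : u.IsMLCR)
    (hmin : u.IsMinimal) {k : ℕ} (hk1 : 1 ≤ k) (hk2 : k ≤ n - 1) : u.gapVec k < k := by
  rw [gap_formula hn u hu hmin hk1 hk2]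
  calc ((Finset.Icc 1 (k-1)).filter _).card ≤ (Finset.Icc 1 (k-1)).card :=
        Finset.card_filter_le _ _
    _ < k := by rw [Nat.card_Icc]; omega

lemma minimal_gap_unique {n : ℕ} (hn : 2 ≤ n) (u u' : AffinePerm n)
    (hu : u.IsMLCR) (hmu : u.IsMinimal) (hu' : u'.IsMLCR) (hmu' : u'.IsMinimal)
    (hg : ∀ k, 1 ≤ k → k ≤ n - 1 → u.gapVec k = u'.gapVec k) : u = u' := by
  have hn0 : 0 < n := by omega
  have hnz : (0:ℤ) < (n:ℤ) := by exact_mod_cast hn0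
  set ρ : ℕ → ℤ := fun j : ℕ => u.toFun (j:ℤ) with hρdef
  set ρ' : ℕ → ℤ := fun j : ℕ => u'.toFun (j:ℤ) with hρ'def
  have hρ : DistRes n ρ := distRes_window hn u
  have hρ' : DistRes n ρ' := distRes_window hn u'
  have hcnt : ∀ k, 1 ≤ k → k ≤ n - 1 → cnt n ρ k = cnt n ρ' k := by
    intro k hk1 hk2
    rw [← gap_formula hn u hu hmu hk1 hk2, ← gap_formula hn u' hu' hmu' hk1 hk2]
    exact hg k hk1 hk2
  have hd := d_unique hn hρ hρ' hcnt
  -- actual consecutive differences agree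
  have hδ : ∀ k, 1 ≤ k → k ≤ n - 1 → ρ (k+1) - ρ k = ρ' (k+1) - ρ' k := by
    intro k hk1 hk2
    have hkZ1 : (1:ℤ) ≤ (k:ℤ) := by exact_mod_cast hk1
    have hkZ2 : (k:ℤ) ≤ (n:ℤ) - 1 := by
      have : (k:ℤ) ≤ ((n-1 : ℕ) : ℤ) := by exact_mod_cast hk2
      omega
    have hb := hmu (k:ℤ) hkZ1 hkZ2
    have hb' := hmu' (k:ℤ) hkZ1 hkZ2
    have hcast : ρ (k+1) = u.toFun ((k:ℤ)+1) := by
      rw [hρdef]; simp only; rw [show ((k+1 : ℕ) : ℤ) = (k:ℤ)+1 by push_cast; ring]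
    have hcast' : ρ' (k+1) = u'.toFun ((k:ℤ)+1) := by
      rw [hρ'def]; simp only; rw [show ((k+1 : ℕ) : ℤ) = (k:ℤ)+1 by push_cast; ring]
    have hρk : ρ k = u.toFun (k:ℤ) := rfl
    have hρ'k : ρ' k = u'.toFun (k:ℤ) := rfl
    have hm1 : (ρ (k+1) - ρ k) % (n:ℤ) = ρ (k+1) - ρ k := by
      rw [hcast, hρk]
      exact Int.emod_eq_of_lt (by omega) (by omega)
    have hm2 : (ρ' (k+1) - ρ' k) % (n:ℤ) = ρ' (k+1) - ρ' k := by
      rw [hcast', hρ'k]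
      exact Int.emod_eq_of_lt (by omega) (by omega)
    rw [← hm1, ← hm2]
    exact hd k hk1 hk2
  -- constant difference on the window
  have hC : ∀ j, 1 ≤ j → j ≤ n → ρ j - ρ' j = ρ 1 - ρ' 1 := by
    intro j hj1
    induction j, hj1 using Nat.le_induction with
    | base => intro _; rfl
    | succ j hj ih =>
        intro hjn
        have h1 := hδ j hj (by omega)
        have h2 := ih (by omega)
        omega
  -- sums agree
  have hsums : ∑ j ∈ Finset.Icc 1 n, ρ j = ∑ j ∈ Finset.Icc 1 n, ρ' j := by
    have h1 := u.sum_base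
    have h2 := u'.sum_base
    rw [sum_reindex n u.toFun] at h1
    rw [sum_reindex n u'.toFun] at h2
    have hr1 : ∑ j ∈ Finset.Icc 1 n, ρ j = ∑ j ∈ Finset.Icc 1 n, u.toFun (j:ℤ) := rfl
    have hr2 : ∑ j ∈ Finset.Icc 1 n, ρ' j = ∑ j ∈ Finset.Icc 1 n, u'.toFun (j:ℤ) := rfl
    rw [hr1, hr2]
    omega
  have hCz : ρ 1 - ρ' 1 = 0 := by
    have h1 : ∑ j ∈ Finset.Icc 1 n, (ρ j - ρ' j) = 0 := by
      rw [Finset.sum_sub_distrib, hsums]; ring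
    have h2 : ∑ j ∈ Finset.Icc 1 n, (ρ j - ρ' j)
        = ∑ j ∈ Finset.Icc 1 n, (ρ 1 - ρ' 1) := by
      apply Finset.sum_congr rfl
      intro j hj
      rw [Finset.mem_Icc] at hj
      exact hC j hj.1 hj.2
    rw [h2, Finset.sum_const, Nat.card_Icc, nsmul_eq_mul] at h1
    have hcc : ((n + 1 - 1 : ℕ) : ℤ) = (n:ℤ) := by omega
    rw [hcc] at h1
    rcases mul_eq_zero.mp h1 with h | h
    · omega
    · exact h
  have hwin : ∀ j : ℕ, 1 ≤ j → j ≤ n → u.toFun (j:ℤ) = u'.toFun (j:ℤ) := by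
    intro j h1 h2
    have := hC j h1 h2
    have h3 : ρ j = ρ' j := by omega
    exact h3
  apply AffinePerm.ext'
  intro i
  have hm1 := Int.emod_nonneg (i - 1) (ne_of_gt hnz)
  have hm2 := Int.emod_lt_of_pos (i - 1) hnz
  have hdm := Int.mul_ediv_add_emod (i - 1) (n:ℤ)
  set j : ℕ := ((i - 1) % (n:ℤ)).toNat + 1 with hj
  have hjc : ((j:ℕ) : ℤ) = (i - 1) % (n:ℤ) + 1 := by
    rw [hj]; push_cast; omega
  have hi : i = (j:ℤ) + (n:ℤ) * ((i - 1) / (n:ℤ)) := by omega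
  have e1 : u.toFun i = u.toFun (j:ℤ) + (n:ℤ) * ((i - 1) / (n:ℤ)) := by
    conv_lhs => rw [hi]
    exact AffinePerm.shift_mul u _ _
  have e1' : u'.toFun i = u'.toFun (j:ℤ) + (n:ℤ) * ((i - 1) / (n:ℤ)) := by
    conv_lhs => rw [hi]
    exact AffinePerm.shift_mul u' _ _
  rw [e1, e1', hwin j (by omega) (by omega)]

end Aux7
/-- unique decomposition of a gap vector over a minimal element. -/
theorem stmt6 (n : ℕ) (hn : 2 ≤ n) (w : AffinePerm n) (hw : w.IsMLCR) :
    ∃! ut : {u : AffinePerm n // u.IsMLCR ∧ u.IsMinimal} × (Fin (n - 1) → ℕ),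
      ∀ i : Fin (n - 1),
        w.gapVec (i.1 + 1) = (i.1 + 1) * ut.2 i + ut.1.1.gapVec (i.1 + 1) := by
  set r : ℕ → ℕ := fun k => w.gapVec k % k with hrdef
  have hr : ∀ k, 1 ≤ k → k ≤ n - 1 → r k < k := fun k h1 _ => Nat.mod_lt _ (by omega)
  obtain ⟨u, hu1, hu2, hu3⟩ := exists_minimal hn r hr
  refine ⟨(⟨u, hu1, hu2⟩, fun i => w.gapVec (i.1+1) / (i.1+1)), ?_, ?_⟩
  · intro i
    have hk2 : i.1 + 1 ≤ n - 1 := by have := i.2; omega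
    simp only
    rw [hu3 _ (by omega) hk2]
    show w.gapVec (i.1+1)
      = (i.1+1) * (w.gapVec (i.1+1) / (i.1+1)) + w.gapVec (i.1+1) % (i.1+1)
    exact (Nat.div_add_mod (w.gapVec (i.1+1)) (i.1+1)).symm
  · rintro ⟨⟨v, hv1, hv2⟩, t⟩ hvt
    simp only at hvt
    have key : ∀ i : Fin (n-1),
        v.gapVec (i.1+1) = r (i.1+1) ∧ t i = w.gapVec (i.1+1) / (i.1+1) := by
      intro i
      have hk1 : 1 ≤ i.1 + 1 := by omega
      have hk2 : i.1 + 1 ≤ n - 1 := by have := i.2; omega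
      have hvti := hvt i
      have hlt : v.gapVec (i.1+1) < i.1+1 := minimal_gap_lt hn v hv1 hv2 hk1 hk2
      have huniq := (Nat.div_mod_unique (a := w.gapVec (i.1+1)) (b := i.1+1)
          (c := v.gapVec (i.1+1)) (d := t i) (by omega : 0 < i.1+1)).mpr
        ⟨by rw [hvti]; exact Nat.add_comm _ _, hlt⟩
      exact ⟨huniq.2.symm, huniq.1.symm⟩
    have hveq : v = u := by
      apply minimal_gap_unique hn v u hv1 hv2 hu1 hu2
      intro k hk1 hk2
      have hflt : k - 1 < n - 1 := by omega
      have hik : (⟨k-1, hflt⟩ : Fin (n-1)).1 + 1 = k := by simp; omega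
      have h := (key ⟨k-1, hflt⟩).1
      rw [hik] at h
      rw [h, hu3 k hk1 hk2]
    refine Prod.ext ?_ ?_
    · exact Subtype.ext hveq
    · funext i
      exact (key i).2
end

section
/- Let p be a permutation of {1, …, k} that has a decreasing subsequence of length 4, i.e., indices a < b < c < d with p(a) > p(b) > p(c) > p(d), and let n ≥ 3. Then the sequence a_m = #{w ∈ S̃_n : ℓ(w) = m and w avoids p} is unbounded. -/
open scoped BigOperators

namespace Stmt12Aux

variable {n : ℕ}

def invSet {n : ℕ} (w : AffinePerm n) : Set (ℤ × ℤ) :=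
  {ij : ℤ × ℤ | 1 ≤ ij.1 ∧ ij.1 ≤ (n : ℤ) ∧ ij.1 < ij.2 ∧ w.toFun ij.2 < w.toFun ij.1}

lemma len_eq (w : AffinePerm n) : w.len = (invSet w).ncard := rfl

lemma apply_add_mul (w : AffinePerm n) (i : ℤ) :
    ∀ t : ℤ, w.toFun (i + t * n) = w.toFun i + t * n := by
  intro t
  induction t using Int.induction_on with
  | zero => simp
  | succ k ih =>
      have h : i + ((k : ℤ) + 1) * n = (i + (k : ℤ) * n) + n := by ring
      rw [h, w.shift, ih]; ring
  | pred k ih =>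
      have h : (i + (-(k : ℤ) - 1) * n) + (n : ℤ) = i + (-(k : ℤ)) * n := by ring
      have h2 := w.shift (i + (-(k : ℤ) - 1) * n)
      rw [h, ih] at h2
      linarith

lemma decomp (hn : 0 < n) (i : ℤ) : ∃ r t : ℤ, 1 ≤ r ∧ r ≤ (n : ℤ) ∧ i = r + t * n := by
  have hne : ((n : ℤ)) ≠ 0 := by exact_mod_cast hn.ne'
  have hpos : (0 : ℤ) < (n : ℤ) := by exact_mod_cast hn
  refine ⟨(i - 1) % n + 1, (i - 1) / n, ?_, ?_, ?_⟩
  · have := Int.emod_nonneg (i - 1) hne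
    linarith
  · have := Int.emod_lt_of_pos (i - 1) hpos
    linarith
  · have := Int.emod_add_mul_ediv (i - 1) (n : ℤ)
    linarith

lemma exists_rep (hn : 0 < n) (w : AffinePerm n) (i : ℤ) :
    ∃ r : ℤ, 1 ≤ r ∧ r ≤ (n : ℤ) ∧ w.toFun i - i = w.toFun r - r := by
  obtain ⟨r, t, h1, h2, h3⟩ := decomp hn i
  refine ⟨r, h1, h2, ?_⟩
  rw [h3, apply_add_mul]; ring

lemma invSet_subset (w : AffinePerm n) (lo hi : ℤ)
    (hlo : ∀ i : ℤ, i + lo ≤ w.toFun i)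
    (hhi : ∀ i : ℤ, 1 ≤ i → i ≤ (n : ℤ) → w.toFun i ≤ hi) :
    invSet w ⊆ ↑(Finset.Icc (1 : ℤ) (n : ℤ) ×ˢ Finset.Ioc (1 : ℤ) (hi - lo)) := by
  rintro ⟨i, j⟩ ⟨h1, h2, h3, h4⟩
  simp only [Finset.coe_product, Set.mem_prod, Finset.mem_coe, Finset.mem_Icc, Finset.mem_Ioc]
  have h5 := hlo j
  have h6 := hhi i h1 h2
  exact ⟨⟨h1, h2⟩, by linarith, by linarith⟩

lemma exists_bounds (hn : 0 < n) (w : AffinePerm n) :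
    ∃ lo hi : ℤ, (∀ i : ℤ, i + lo ≤ w.toFun i) ∧
      (∀ i : ℤ, 1 ≤ i → i ≤ (n : ℤ) → w.toFun i ≤ hi) := by
  have hne : (Finset.Icc (1 : ℤ) (n : ℤ)).Nonempty := ⟨1, by simp; exact_mod_cast hn⟩
  obtain ⟨r0, hr0m, hr0⟩ := Finset.exists_min_image _ (fun r => w.toFun r - r) hne
  obtain ⟨r1, hr1m, hr1⟩ := Finset.exists_max_image _ w.toFun hne
  refine ⟨w.toFun r0 - r0, w.toFun r1, ?_, ?_⟩
  · intro i
    obtain ⟨r, h1, h2, h3⟩ := exists_rep hn w i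
    have := hr0 r (by simp [Finset.mem_Icc]; exact ⟨h1, h2⟩)
    linarith
  · intro i h1 h2
    exact hr1 i (by simp [Finset.mem_Icc]; exact ⟨h1, h2⟩)

lemma invSet_finite (hn : 0 < n) (w : AffinePerm n) : (invSet w).Finite := by
  obtain ⟨lo, hi, hlo, hhi⟩ := exists_bounds hn w
  exact Set.Finite.subset (Finset.finite_toSet _) (invSet_subset w lo hi hlo hhi)

lemma pair_bound (hn3 : 3 ≤ n) (w : AffinePerm n) {r r' : ℤ}
    (h1 : 1 ≤ r) (h2 : r ≤ (n : ℤ)) (h1' : 1 ≤ r') (h2' : r' ≤ (n : ℤ)) :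
    w.toFun r ≤ w.toFun r' + ((w.len : ℤ) + 1) * n := by
  have hn : 0 < n := by omega
  have hpos : (0 : ℤ) < (n : ℤ) := by exact_mod_cast hn
  have hne : ((n : ℤ)) ≠ 0 := hpos.ne'
  set x := w.toFun r - w.toFun r' - 1 with hx
  set q := x / (n : ℤ) with hq
  have hed : x % (n : ℤ) + (n : ℤ) * q = x := Int.emod_add_mul_ediv x (n : ℤ)
  have hml := Int.emod_lt_of_pos x hpos
  have hmn := Int.emod_nonneg x hne
  have hql : q ≤ (w.len : ℤ) := by
    rcases le_or_gt q 0 with hq0 | hq0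
    · have : (0 : ℤ) ≤ (w.len : ℤ) := by positivity
      linarith
    · have hinj : Function.Injective (fun kk : ℤ => ((r, r' + kk * (n : ℤ)) : ℤ × ℤ)) := by
        intro k1 k2 h
        simp only [Prod.mk.injEq] at h
        have hk : k1 * (n : ℤ) = k2 * (n : ℤ) := by linarith [h.2]
        exact mul_right_cancel₀ hne hk
      have hqn : q * (n : ℤ) ≤ x := by nlinarith
      have hsub : ↑((Finset.Icc (1 : ℤ) q).image fun kk => ((r, r' + kk * (n : ℤ)) : ℤ × ℤ))
          ⊆ invSet w := by
        intro y hy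
        simp only [Finset.coe_image, Set.mem_image, Finset.mem_coe, Finset.mem_Icc] at hy
        obtain ⟨kk, ⟨hk1, hk2⟩, rfl⟩ := hy
        have hkn : (n : ℤ) ≤ kk * (n : ℤ) := by nlinarith
        have hkq : kk * (n : ℤ) ≤ q * (n : ℤ) := by nlinarith
        refine ⟨h1, h2, ?_, ?_⟩
        · show r < r' + kk * (n : ℤ)
          linarith
        · show w.toFun (r' + kk * (n : ℤ)) < w.toFun r
          rw [apply_add_mul]
          linarith
      have hcard : ((Finset.Icc (1 : ℤ) q).image fun kk => ((r, r' + kk * (n : ℤ)) : ℤ × ℤ)).card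
          = q.toNat := by
        rw [Finset.card_image_of_injective _ hinj, Int.card_Icc]
        simp
      have hle := Set.ncard_le_ncard hsub (invSet_finite hn w)
      rw [Set.ncard_coe_finset, hcard] at hle
      rw [len_eq]
      omega
  have h5 : (n : ℤ) * q ≤ (n : ℤ) * (w.len : ℤ) := by
    exact mul_le_mul_of_nonneg_left hql (by positivity)
  linarith

lemma window_ub (hn3 : 3 ≤ n) (w : AffinePerm n) {r : ℤ} (h1 : 1 ≤ r) (h2 : r ≤ (n : ℤ)) :
    2 * w.toFun r ≤ (n : ℤ) + 1 + 2 * ((w.len : ℤ) + 1) * n := by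
  have hn : 0 < n := by omega
  have hpos : (0 : ℤ) < (n : ℤ) := by exact_mod_cast hn
  have hne : (Finset.Icc (1 : ℤ) (n : ℤ)).Nonempty := ⟨1, by simp; exact_mod_cast hn⟩
  obtain ⟨r', hr'm, hmin⟩ := Finset.exists_min_image _ w.toFun hne
  rw [Finset.mem_Icc] at hr'm
  have hcardIcc : (Finset.Icc (1 : ℤ) (n : ℤ)).card = n := by
    rw [Int.card_Icc]; simp
  have hs : (n : ℤ) * w.toFun r' ≤ ∑ i ∈ Finset.Icc (1 : ℤ) (n : ℤ), w.toFun i := by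
    calc (n : ℤ) * w.toFun r' = ∑ _i ∈ Finset.Icc (1 : ℤ) (n : ℤ), w.toFun r' := by
          rw [Finset.sum_const, hcardIcc, nsmul_eq_mul]
      _ ≤ _ := Finset.sum_le_sum (fun i hi => hmin i hi)
  have hsum := w.sum_base
  have h2wr' : 2 * w.toFun r' ≤ (n : ℤ) + 1 := by
    have hmul : (n : ℤ) * (2 * w.toFun r') ≤ (n : ℤ) * ((n : ℤ) + 1) := by linarith
    exact le_of_mul_le_mul_left hmul hpos
  have hpb := pair_bound hn3 w h1 h2 hr'm.1 hr'm.2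
  linarith

lemma window_lb (hn3 : 3 ≤ n) (w : AffinePerm n) {r : ℤ} (h1 : 1 ≤ r) (h2 : r ≤ (n : ℤ)) :
    (n : ℤ) * ((n : ℤ) + 1) - ((n : ℤ) - 1) * ((n : ℤ) + 1 + 2 * ((w.len : ℤ) + 1) * n)
      ≤ 2 * w.toFun r := by
  have hn : 0 < n := by omega
  have hrm : r ∈ Finset.Icc (1 : ℤ) (n : ℤ) := by rw [Finset.mem_Icc]; exact ⟨h1, h2⟩
  have hsplit := (Finset.add_sum_erase _ w.toFun hrm).symm
  have hsum := w.sum_base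
  set UB := (n : ℤ) + 1 + 2 * ((w.len : ℤ) + 1) * n with hUB
  have hb : ∀ i ∈ (Finset.Icc (1 : ℤ) (n : ℤ)).erase r, 2 * w.toFun i ≤ UB := by
    intro i hi
    have him := Finset.mem_of_mem_erase hi
    rw [Finset.mem_Icc] at him
    exact window_ub hn3 w him.1 him.2
  have hcard : ((Finset.Icc (1 : ℤ) (n : ℤ)).erase r).card = n - 1 := by
    rw [Finset.card_erase_of_mem hrm, Int.card_Icc]; simp
  have hsb : 2 * ∑ i ∈ (Finset.Icc (1 : ℤ) (n : ℤ)).erase r, w.toFun i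
      ≤ ((n : ℤ) - 1) * UB := by
    calc 2 * ∑ i ∈ (Finset.Icc (1 : ℤ) (n : ℤ)).erase r, w.toFun i
        = ∑ i ∈ (Finset.Icc (1 : ℤ) (n : ℤ)).erase r, 2 * w.toFun i := by
          rw [Finset.mul_sum]
      _ ≤ ∑ _i ∈ (Finset.Icc (1 : ℤ) (n : ℤ)).erase r, UB := Finset.sum_le_sum hb
      _ = ((n : ℤ) - 1) * UB := by
          rw [Finset.sum_const, hcard, nsmul_eq_mul]
          congr 1
          push_cast [Nat.cast_sub (by omega : 1 ≤ n)]
          ring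
  linarith

lemma ext' (w w' : AffinePerm n) (h : ∀ i, w.toFun i = w'.toFun i) : w = w' := by
  have h2 : w.toFun = w'.toFun := funext h
  cases w; cases w'
  cases h2
  rfl

noncomputable def windowMap (w : AffinePerm n) : Fin n → ℤ := fun i => w.toFun ((i : ℤ) + 1)

lemma windowMap_injective (hn : 0 < n) :
    Function.Injective (windowMap (n := n)) := by
  intro w w' h
  apply ext'
  intro i
  obtain ⟨r, t, h1, h2, h3⟩ := decomp hn i
  have hfin : (r - 1).toNat < n := by omega
  have hcast : ((⟨(r - 1).toNat, hfin⟩ : Fin n) : ℤ) + 1 = r := by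
    simp only [Fin.val_natCast]
    omega
  have hr : w.toFun r = w'.toFun r := by
    rw [← hcast]
    exact congrFun h ⟨(r - 1).toNat, hfin⟩
  rw [h3, apply_add_mul, apply_add_mul, hr]

lemma setFinite (hn3 : 3 ≤ n) (m : ℕ) : {w : AffinePerm n | w.len = m}.Finite := by
  have hn : 0 < n := by omega
  set UB := (n : ℤ) + 1 + 2 * ((m : ℤ) + 1) * n with hUB
  set LO := (n : ℤ) * ((n : ℤ) + 1) - ((n : ℤ) - 1) * UB - UB with hLO
  have hUBnn : 0 ≤ UB := by positivity
  have hfin : (Set.pi Set.univ fun _ : Fin n => Set.Icc LO UB).Finite :=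
    Set.Finite.pi fun _ => Set.finite_Icc LO UB
  apply Set.Finite.subset (Set.Finite.preimage ((windowMap_injective hn).injOn) hfin)
  intro w hw
  simp only [Set.mem_setOf_eq] at hw
  simp only [Set.mem_preimage, Set.mem_pi, Set.mem_univ, forall_true_left, Set.mem_Icc]
  intro i
  have hi1 : (1 : ℤ) ≤ (i : ℤ) + 1 := by omega
  have hi2 : ((i : ℤ) + 1) ≤ (n : ℤ) := by exact_mod_cast by omega
  have hub := window_ub hn3 w hi1 hi2
  have hlb := window_lb hn3 w hi1 hi2
  rw [hw] at hub hlb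
  rw [← hUB] at hub hlb
  constructor
  · show LO ≤ w.toFun ((i : ℤ) + 1)
    have : w.toFun ((i : ℤ) + 1) ≤ UB := by linarith
    linarith
  · show w.toFun ((i : ℤ) + 1) ≤ UB
    linarith

def famShift (n : ℕ) (s t : ℕ) (i : ℤ) : ℤ :=
  if i % (n : ℤ) = 1 then (s : ℤ)
  else if i % (n : ℤ) = 2 then ((n : ℤ) - 2) * t - s
  else -(t : ℤ)

def famFun (n : ℕ) (s t : ℕ) (i : ℤ) : ℤ := i + famShift n s t i * n

lemma famShift_congr {s t : ℕ} {i j : ℤ} (h : i % (n : ℤ) = j % (n : ℤ)) :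
    famShift n s t i = famShift n s t j := by
  unfold famShift
  rw [h]

lemma famFun_emod (s t : ℕ) (i : ℤ) : famFun n s t i % (n : ℤ) = i % (n : ℤ) := by
  unfold famFun
  exact Int.add_mul_emod_self_right ..

lemma famFun_bij (s t : ℕ) : Function.Bijective (famFun n s t) := by
  apply Function.bijective_iff_has_inverse.mpr
  refine ⟨fun y => y - famShift n s t y * n, ?_, ?_⟩
  · intro i
    show famFun n s t i - famShift n s t (famFun n s t i) * (n : ℤ) = i
    rw [famShift_congr (n := n) (s := s) (t := t) (famFun_emod (n := n) s t i)]
    unfold famFun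
    ring
  · intro y
    have hmod : (y - famShift n s t y * (n : ℤ)) % (n : ℤ) = y % (n : ℤ) := by
      have h : y - famShift n s t y * (n : ℤ) = y + (-(famShift n s t y)) * (n : ℤ) := by ring
      rw [h]
      exact Int.add_mul_emod_self_right ..
    show famFun n s t (y - famShift n s t y * (n : ℤ)) = y
    unfold famFun
    rw [famShift_congr (n := n) (s := s) (t := t) hmod]
    ring

lemma famFun_shift (s t : ℕ) (i : ℤ) : famFun n s t (i + (n : ℤ)) = famFun n s t i + n := by
  have hmod : (i + (n : ℤ)) % (n : ℤ) = i % (n : ℤ) := by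
    have h : i + (n : ℤ) = i + 1 * (n : ℤ) := by ring
    rw [h]
    exact Int.add_mul_emod_self_right ..
  have h := famShift_congr (n := n) (s := s) (t := t) hmod
  unfold famFun
  rw [h]
  ring

lemma gauss : ∀ N : ℕ, 2 * ∑ i ∈ Finset.Icc (1 : ℤ) (N : ℤ), i = (N : ℤ) * ((N : ℤ) + 1) := by
  intro N
  induction N with
  | zero => simp
  | succ kk ih =>
      have h : Finset.Icc (1 : ℤ) ((kk : ℤ) + 1) = insert ((kk : ℤ) + 1) (Finset.Icc (1 : ℤ) (kk : ℤ)) := by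
        ext x
        simp only [Finset.mem_Icc, Finset.mem_insert]
        omega
      push_cast
      rw [h, Finset.sum_insert (by simp)]
      push_cast at ih
      linarith

lemma sshift (hn : 3 ≤ n) (s t : ℕ) :
    ∑ i ∈ Finset.Icc (1 : ℤ) (n : ℤ), famShift n s t i = 0 := by
  have hn3 : (3 : ℤ) ≤ (n : ℤ) := by exact_mod_cast hn
  have hsplit : ∀ i ∈ Finset.Icc (1 : ℤ) (n : ℤ), famShift n s t i
      = ((if i = 1 then ((s : ℤ) + t) else 0) + (if i = 2 then (((n : ℤ) - 2) * t - s + t) else 0)) - t := by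
    intro i hi
    simp only [Finset.mem_Icc] at hi
    unfold famShift
    rcases eq_or_lt_of_le hi.2 with heq | hlt
    · subst heq
      rw [Int.emod_self]
      rw [if_neg (by omega), if_neg (by omega), if_neg (by omega), if_neg (by omega)]
      ring
    · have hm : i % (n : ℤ) = i := Int.emod_eq_of_lt (by omega) hlt
      rw [hm]
      by_cases h1 : i = 1
      · subst h1
        norm_num
      · by_cases h2 : i = 2
        · subst h2
          norm_num
        · rw [if_neg h1, if_neg h2, if_neg h1, if_neg h2]
          ring
  rw [Finset.sum_congr rfl hsplit]
  rw [Finset.sum_sub_distrib, Finset.sum_add_distrib]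
  rw [Finset.sum_ite_eq' (Finset.Icc (1 : ℤ) (n : ℤ)) (1 : ℤ) (fun _ => (s : ℤ) + t)]
  rw [Finset.sum_ite_eq' (Finset.Icc (1 : ℤ) (n : ℤ)) (2 : ℤ) (fun _ => ((n : ℤ) - 2) * t - s + t)]
  rw [if_pos (by rw [Finset.mem_Icc]; omega), if_pos (by rw [Finset.mem_Icc]; omega)]
  rw [Finset.sum_const, Int.card_Icc]
  have hcard : ((n : ℤ) + 1 - 1).toNat = n := by omega
  rw [hcard, nsmul_eq_mul]
  ring

noncomputable def famW (n : ℕ) (hn : 3 ≤ n) (s t : ℕ) : AffinePerm n where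
  toFun := famFun n s t
  bijective := famFun_bij s t
  shift := famFun_shift s t
  sum_base := by
    have h1 : ∑ i ∈ Finset.Icc (1 : ℤ) (n : ℤ), famFun n s t i
        = (∑ i ∈ Finset.Icc (1 : ℤ) (n : ℤ), i)
          + (∑ i ∈ Finset.Icc (1 : ℤ) (n : ℤ), famShift n s t i) * (n : ℤ) := by
      rw [Finset.sum_mul, ← Finset.sum_add_distrib]
      exact Finset.sum_congr rfl (fun x _ => rfl)
    rw [h1, sshift hn]
    have := gauss n
    linarith

lemma famShift_mem (s t : ℕ) (i : ℤ) :
    famShift n s t i = (s : ℤ) ∨ famShift n s t i = ((n : ℤ) - 2) * t - s ∨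
      famShift n s t i = -(t : ℤ) := by
  unfold famShift
  split_ifs <;> tauto

lemma famShift_lb (hn : 3 ≤ n) (s t : ℕ) (i : ℤ) :
    -((s : ℤ) + t) ≤ famShift n s t i := by
  have hn3 : (3 : ℤ) ≤ (n : ℤ) := by exact_mod_cast hn
  have hnn : (0 : ℤ) ≤ ((n : ℤ) - 2) * t := mul_nonneg (by linarith) (by positivity)
  have hs : (0 : ℤ) ≤ (s : ℤ) := by positivity
  have ht : (0 : ℤ) ≤ (t : ℤ) := by positivity
  rcases famShift_mem (n := n) s t i with h | h | h <;> rw [h] <;> linarith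

lemma famShift_ub (hn : 3 ≤ n) (s t : ℕ) (i : ℤ) :
    famShift n s t i ≤ (s : ℤ) + ((n : ℤ) - 2) * t := by
  have hn3 : (3 : ℤ) ≤ (n : ℤ) := by exact_mod_cast hn
  have hnn : (0 : ℤ) ≤ ((n : ℤ) - 2) * t := mul_nonneg (by linarith) (by positivity)
  have hs : (0 : ℤ) ≤ (s : ℤ) := by positivity
  have ht : (0 : ℤ) ≤ (t : ℤ) := by positivity
  rcases famShift_mem (n := n) s t i with h | h | h <;> rw [h] <;> linarith

lemma famW_len_le (hn : 3 ≤ n) (s t M : ℕ) (hs : s ≤ M) (ht : t ≤ M) :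
    (famW n hn s t).len ≤ n * n + n + n * n * (n + 1) * M := by
  have hn3 : (3 : ℤ) ≤ (n : ℤ) := by exact_mod_cast hn
  have hnn : (0 : ℤ) ≤ (n : ℤ) := by linarith
  set lo := -(((s : ℤ) + t) * (n : ℤ)) with hlo_def
  set hi := (n : ℤ) + ((s : ℤ) + ((n : ℤ) - 2) * t) * (n : ℤ) with hhi_def
  have hlo : ∀ i : ℤ, i + lo ≤ (famW n hn s t).toFun i := by
    intro i
    show i + lo ≤ famFun n s t i
    unfold famFun
    have h1 := famShift_lb hn s t i
    have h2 : -((s : ℤ) + t) * (n : ℤ) ≤ famShift n s t i * (n : ℤ) :=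
      mul_le_mul_of_nonneg_right h1 hnn
    rw [hlo_def]
    linarith
  have hhi : ∀ i : ℤ, 1 ≤ i → i ≤ (n : ℤ) → (famW n hn s t).toFun i ≤ hi := by
    intro i h1 h2
    show famFun n s t i ≤ hi
    unfold famFun
    have h3 := famShift_ub hn s t i
    have h4 : famShift n s t i * (n : ℤ) ≤ ((s : ℤ) + ((n : ℤ) - 2) * t) * (n : ℤ) :=
      mul_le_mul_of_nonneg_right h3 hnn
    rw [hhi_def]
    linarith
  have hsub := invSet_subset (famW n hn s t) lo hi hlo hhi
  have hle := Set.ncard_le_ncard hsub (Finset.finite_toSet _)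
  rw [← len_eq] at hle
  rw [Set.ncard_coe_finset, Finset.card_product, Int.card_Icc, Int.card_Ioc] at hle
  have hIcc : ((n : ℤ) + 1 - 1).toNat = n := by omega
  rw [hIcc] at hle
  refine hle.trans ?_
  have hXint : hi - lo - 1 - 1 ≤ ((n + n * (n + 1) * M : ℕ) : ℤ) := by
    rw [hhi_def, hlo_def]
    push_cast
    have e2 : (t : ℤ) ≤ M := by exact_mod_cast ht
    have e3 : (s : ℤ) ≤ M := by exact_mod_cast hs
    have e4 : ((n : ℤ) - 1) * t ≤ ((n : ℤ) - 1) * M :=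
      mul_le_mul_of_nonneg_left e2 (by linarith)
    have e5 : 2 * (s : ℤ) + ((n : ℤ) - 1) * t ≤ 2 * (M : ℤ) + ((n : ℤ) - 1) * M := by linarith
    have e6 : (2 * (s : ℤ) + ((n : ℤ) - 1) * t) * (n : ℤ)
        ≤ (2 * (M : ℤ) + ((n : ℤ) - 1) * M) * (n : ℤ) := mul_le_mul_of_nonneg_right e5 hnn
    nlinarith [e6]
  have hX : (hi - lo - 1 - 1).toNat ≤ n + n * (n + 1) * M := by
    omega
  have hfix : (hi - lo - 1).toNat ≤ n + n * (n + 1) * M + 1 := by omega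
  calc n * (hi - lo - 1).toNat ≤ n * (n + n * (n + 1) * M + 1) := Nat.mul_le_mul_left _ hfix
    _ = n * n + n + n * n * (n + 1) * M := by ring

lemma famW_avoids (hn : 3 ≤ n) {k : ℕ} (p : Equiv.Perm (Fin k))
    (h4 : ∃ a b c d : Fin k, a < b ∧ b < c ∧ c < d ∧ p d < p c ∧ p c < p b ∧ p b < p a)
    (s t : ℕ) : ¬ (famW n hn s t).Contains p := by
  rintro ⟨f, hf, hiff⟩
  obtain ⟨a, b, c, d, hab, hbc, hcd, h1, h2, h3⟩ := h4
  have key : ∀ x y : Fin k, x < y → p y < p x →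
      famShift n s t (f x) ≠ famShift n s t (f y) := by
    intro x y hxy hpxy heq
    have hv : (famW n hn s t).toFun (f y) < (famW n hn s t).toFun (f x) := (hiff y x).mpr hpxy
    have hv2 : famFun n s t (f y) < famFun n s t (f x) := hv
    unfold famFun at hv2
    rw [heq] at hv2
    have hfxy := hf hxy
    linarith
  have nab := key a b hab h3
  have nac := key a c (hab.trans hbc) (h2.trans h3)
  have nad := key a d ((hab.trans hbc).trans hcd) ((h1.trans h2).trans h3)
  have nbc := key b c hbc h2
  have nbd := key b d (hbc.trans hcd) (h1.trans h2)
  have ncd := key c d hcd h1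
  clear hiff hf h1 h2 h3 hab hbc hcd key
  rcases famShift_mem (n := n) s t (f a) with ha | ha | ha <;>
  rcases famShift_mem (n := n) s t (f b) with hb | hb | hb <;>
  rcases famShift_mem (n := n) s t (f c) with hc | hc | hc <;>
  rcases famShift_mem (n := n) s t (f d) with hd | hd | hd <;>
  simp_all

lemma famW_inj (hn : 3 ≤ n) : Function.Injective (fun q : ℕ × ℕ => famW n hn q.1 q.2) := by
  have hn0 : ((n : ℤ)) ≠ 0 := by
    have : 0 < n := by omega
    exact_mod_cast this.ne'
  rintro ⟨s, t⟩ ⟨s', t'⟩ h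
  have htf : famFun n s t = famFun n s' t' := congrArg AffinePerm.toFun h
  have h1 : famFun n s t 1 = famFun n s' t' 1 := congrFun htf 1
  have h2 : famFun n s t (n : ℤ) = famFun n s' t' (n : ℤ) := congrFun htf (n : ℤ)
  have e1 : (1 : ℤ) % (n : ℤ) = 1 := Int.emod_eq_of_lt (by norm_num) (by exact_mod_cast by omega)
  have e2 : ((n : ℤ)) % (n : ℤ) = 0 := Int.emod_self
  unfold famFun famShift at h1 h2
  rw [e1] at h1
  rw [e2] at h2
  norm_num at h1 h2
  simp only [Prod.mk.injEq]
  constructor <;> omega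

end Stmt12Aux
/-- if `p` has a decreasing subsequence of length 4 then the avoidance
counting sequence is unbounded. -/
theorem stmt12 (k : ℕ) (p : Equiv.Perm (Fin k))
    (h4 : ∃ a b c d : Fin k, a < b ∧ b < c ∧ c < d ∧ p d < p c ∧ p c < p b ∧ p b < p a)
    (n : ℕ) (hn : 3 ≤ n) :
    ∀ B : ℕ, ∃ m : ℕ, B < {w : AffinePerm n | w.len = m ∧ ¬ w.Contains p}.ncard := by
  intro B
  classical
  set K : ℕ := n * n + n + n * n * (n + 1) + 1 with hK
  set M : ℕ := K * B with hM
  set L : ℕ := n * n + n + n * n * (n + 1) * M with hL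
  have hmap : ∀ q ∈ (Finset.range (M + 1)) ×ˢ (Finset.range (M + 1)),
      (Stmt12Aux.famW n hn q.1 q.2).len ∈ Finset.range (L + 1) := by
    rintro ⟨s, t⟩ hq
    simp only [Finset.mem_product, Finset.mem_range] at hq
    simp only [Finset.mem_range]
    have := Stmt12Aux.famW_len_le hn s t M (by omega) (by omega)
    omega
  have hcard : (Finset.range (L + 1)).card * B
      < ((Finset.range (M + 1)) ×ˢ (Finset.range (M + 1))).card := by
    rw [Finset.card_product, Finset.card_range, Finset.card_range]
    have h1 : L + 1 ≤ K * (M + 1) := by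
      rw [hL, hK]
      nlinarith [Nat.zero_le M]
    have h2 : K * B < M + 1 := by omega
    calc (L + 1) * B ≤ (K * (M + 1)) * B := Nat.mul_le_mul_right _ h1
      _ = (K * B) * (M + 1) := by ring
      _ < (M + 1) * (M + 1) := by
          apply Nat.mul_lt_mul_of_lt_of_le h2 (le_refl _)
          omega
  obtain ⟨m, _, hmB⟩ := Finset.exists_lt_card_fiber_of_mul_lt_card_of_maps_to hmap hcard
  refine ⟨m, ?_⟩
  set Q := ((Finset.range (M + 1)) ×ˢ (Finset.range (M + 1))).filter
    (fun q => (Stmt12Aux.famW n hn q.1 q.2).len = m) with hQdef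
  have hfin : {w : AffinePerm n | w.len = m ∧ ¬ w.Contains p}.Finite :=
    (Stmt12Aux.setFinite hn m).subset (fun w hw => hw.1)
  have himg : (fun q : ℕ × ℕ => Stmt12Aux.famW n hn q.1 q.2) '' ↑Q
      ⊆ {w : AffinePerm n | w.len = m ∧ ¬ w.Contains p} := by
    rintro w ⟨q, hq, rfl⟩
    rw [Finset.mem_coe, hQdef, Finset.mem_filter] at hq
    exact ⟨hq.2, Stmt12Aux.famW_avoids hn p h4 q.1 q.2⟩
  have hle := Set.ncard_le_ncard himg hfin
  rw [Set.ncard_image_of_injective _ (Stmt12Aux.famW_inj hn), Set.ncard_coe_finset] at hle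
  omega
end
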